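/- arXiv:2511.20539 — 6 statements merged into one kernel-verified Lean document; each statement's English description precedes it below -/
import Mathlib

section
/- (Andreief identity) Let (X, μ) be a measure space and f_1, …, f_N : X → ℂ measurable functions lying in L²(X, μ). Then ∫_{X^N} |det (f_j(x_i))_{i,j=1}^N|² dμ(x_1) ⋯ dμ(x_N) = N! · det (G_{ij})_{i,j=1}^N, where G_{ij} := ∫_X f_i(x) · conj(f_j(x)) dμ(x) is the Gram matrix of the family. -/
/-!
By the Leibniz formula,
`|det (f_j(x_i))|² = ∑_{σ,τ} sgn σ sgn τ ∏_i f_{σ i}(x_i) conj (f_{τ i}(x_i))`,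
and by Fubini each term integrates to `sgn σ sgn τ ∏_i G_{σ i, τ i}`. For fixed `σ` the sum over
`τ` is the determinant of the rows of `G` permuted by `σ`, i.e. `sgn σ · det G`, so every `σ`
contributes `det G`.

Fubini needs `μ` to be σ-finite. In general, since the `f_j` lie in `L²`, they all vanish outside
a set `S` on which `μ` is σ-finite; the integrand vanishes outside the box `S^N`, and on that box
the product of the `μ` agrees with the product of the `μ.restrict S`.
-/

open MeasureTheory
open scoped ENNReal

namespace MeasureTheory.Measure

variable {ι : Type*} [Fintype ι] {α : ι → Type*} [∀ i, MeasurableSpace (α i)]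

theorem restrict_univ_pi_eq_restrict_pi_restrict (μ : ∀ i, Measure (α i))
    {s : ∀ i, Set (α i)} (hs : ∀ i, MeasurableSet (s i)) :
    (Measure.pi μ).restrict (Set.univ.pi s) =
      (Measure.pi fun i => (μ i).restrict (s i)).restrict (Set.univ.pi s) := by
  set m := OuterMeasure.pi fun i => (μ i).toOuterMeasure
  set m' := OuterMeasure.pi fun i => ((μ i).restrict (s i)).toOuterMeasure
  have hm'_le : m' ≤ m := OuterMeasure.le_pi.2 fun t _ =>
    (OuterMeasure.pi_pi_le _ t).trans <|
      Finset.prod_le_prod' fun i _ => Measure.restrict_le_self (t i)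
  have hrestrict_le : OuterMeasure.restrict (Set.univ.pi s) m ≤ m' :=
    OuterMeasure.le_pi.2 fun t _ => by
      rw [OuterMeasure.restrict_apply, ← Set.pi_inter_distrib]
      refine (OuterMeasure.pi_pi_le _ _).trans_eq (Finset.prod_congr rfl fun i _ => ?_)
      exact (Measure.restrict_apply' (hs i)).symm
  ext E hE
  have hEs : MeasurableSet (E ∩ Set.univ.pi s) := hE.inter (.univ_pi hs)
  rw [restrict_apply hE, restrict_apply hE, Measure.pi_def, Measure.pi_def,
    toMeasure_apply _ _ hEs, toMeasure_apply _ _ hEs]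
  refine le_antisymm ?_ (hm'_le _)
  simpa [Set.inter_assoc] using hrestrict_le (E ∩ Set.univ.pi s)

theorem integral_pi_eq_integral_pi_restrict {E : Type*} [NormedAddCommGroup E]
    [NormedSpace ℝ E] (μ : ∀ i, Measure (α i)) {s : ∀ i, Set (α i)} (hs : ∀ i, MeasurableSet (s i))
    {g : (∀ i, α i) → E} (hg : ∀ x ∉ Set.univ.pi s, g x = 0) :
    ∫ x, g x ∂Measure.pi μ = ∫ x, g x ∂Measure.pi fun i => (μ i).restrict (s i) := by
  rw [← setIntegral_eq_integral_of_forall_compl_eq_zero hg,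
    restrict_univ_pi_eq_restrict_pi_restrict μ hs]
  exact setIntegral_eq_integral_of_forall_compl_eq_zero hg

end MeasureTheory.Measure

theorem exists_sigmaFinite_restrict_of_memLp {X : Type*} [MeasurableSpace X] {μ : Measure X}
    {ι : Type*} [Finite ι] {E : Type*} [NormedAddCommGroup E] {p : ℝ≥0∞} (hp0 : p ≠ 0)
    (hp : p ≠ ∞) {f : ι → X → E} (hmeas : ∀ j, StronglyMeasurable (f j))
    (hf : ∀ j, MemLp (f j) p μ) :
    ∃ S, MeasurableSet S ∧ (∀ j, ∀ x ∉ S, f j x = 0) ∧ SigmaFinite (μ.restrict S) := by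
  choose t ht hft htμ using fun j =>
    ((hf j).finStronglyMeasurable_of_stronglyMeasurable (hmeas j) hp0 hp).exists_set_sigmaFinite
  refine ⟨⋃ j, t j, .iUnion ht,
    fun j x hx => hft j x fun hxj => hx (Set.mem_iUnion_of_mem j hxj),
    Measure.sigmaFinite_of_le _ Measure.restrict_iUnion_le⟩

namespace Matrix

variable {n R : Type*} [Fintype n] [DecidableEq n] [CommRing R]

theorem det_eq_sum_sign_mul_prod (A : Matrix n n R) :
    A.det = ∑ σ : Equiv.Perm n, ((Equiv.Perm.sign σ : ℤ) : R) * ∏ i, A i (σ i) := by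
  rw [← det_transpose, det_apply']
  rfl

theorem sum_sign_mul_prod_apply_perm (G : Matrix n n R) (σ : Equiv.Perm n) :
    ∑ τ : Equiv.Perm n, ((Equiv.Perm.sign τ : ℤ) : R) * ∏ i, G (σ i) (τ i) =
      ((Equiv.Perm.sign σ : ℤ) : R) * G.det := by
  rw [← det_permute, det_eq_sum_sign_mul_prod]
  rfl

theorem sum_sum_sign_mul_sign_mul_prod (G : Matrix n n R) :
    ∑ σ : Equiv.Perm n, ∑ τ : Equiv.Perm n,
        ((Equiv.Perm.sign σ : ℤ) : R) * ((Equiv.Perm.sign τ : ℤ) : R) * ∏ i, G (σ i) (τ i) =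
      (Fintype.card n).factorial * G.det := by
  simp_rw [mul_assoc, ← Finset.mul_sum, sum_sign_mul_prod_apply_perm, ← mul_assoc,
    ← Int.cast_mul, ← Units.val_mul, Int.units_mul_self, Units.val_one, Int.cast_one, one_mul,
    Finset.sum_const, Finset.card_univ, Fintype.card_perm, nsmul_eq_mul]

theorem ofReal_norm_det_sq {𝕜 : Type*} [RCLike 𝕜] (A : Matrix n n 𝕜) :
    ((‖A.det‖ ^ 2 : ℝ) : 𝕜) = ∑ σ : Equiv.Perm n, ∑ τ : Equiv.Perm n,
      ((Equiv.Perm.sign σ : ℤ) : 𝕜) * ((Equiv.Perm.sign τ : ℤ) : 𝕜) *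
        ∏ i, A i (σ i) * (starRingEnd 𝕜) (A i (τ i)) := by
  rw [RCLike.ofReal_pow, ← RCLike.mul_conj, det_eq_sum_sign_mul_prod, map_sum,
    Finset.sum_mul_sum]
  refine Finset.sum_congr rfl fun σ _ => Finset.sum_congr rfl fun τ _ => ?_
  rw [map_mul, map_prod, map_intCast, Finset.prod_mul_distrib]
  ring

end Matrix

theorem integral_norm_det_sq_eq_factorial_mul_det {𝕜 X ι : Type*} [RCLike 𝕜]
    [MeasurableSpace X] [Fintype ι] [DecidableEq ι] (μ : Measure X) [SigmaFinite μ] {f : ι → X → 𝕜}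
    (hf : ∀ j, MemLp (f j) 2 μ) :
    ((∫ x : ι → X, ‖(Matrix.of fun i j => f j (x i)).det‖ ^ 2 ∂Measure.pi fun _ => μ : ℝ) : 𝕜) =
      (Fintype.card ι).factorial *
        (Matrix.of fun i j => ∫ x, f i x * starRingEnd 𝕜 (f j x) ∂μ).det := by
  have hprod (σ τ : Equiv.Perm ι) : Integrable (fun x : ι → X =>
      ∏ i, f (σ i) (x i) * starRingEnd 𝕜 (f (τ i) (x i))) (Measure.pi fun _ => μ) :=
    Integrable.fintype_prod fun i => (hf (σ i)).integrable_mul (hf (τ i)).star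
  rw [← integral_ofReal, ← Matrix.sum_sum_sign_mul_sign_mul_prod]
  simp_rw [Matrix.ofReal_norm_det_sq, Matrix.of_apply]
  rw [integral_finsetSum _ fun σ _ =>
    integrable_finsetSum _ fun τ _ => (hprod σ τ).const_mul _]
  refine Finset.sum_congr rfl fun σ _ => ?_
  rw [integral_finsetSum _ fun τ _ => (hprod σ τ).const_mul _]
  refine Finset.sum_congr rfl fun τ _ => ?_
  rw [integral_const_mul,
    integral_fintype_prod_eq_prod fun i y => f (σ i) y * starRingEnd 𝕜 (f (τ i) y)]

theorem andreief_identity_general {X : Type*} [MeasurableSpace X] (μ : Measure X)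
    (N : ℕ) (f : Fin N → X → ℂ)
    (hmeas : ∀ j, Measurable (f j))
    (hL2 : ∀ j, MemLp (f j) 2 μ) :
    ((∫ x : Fin N → X,
        ‖(Matrix.of fun i j : Fin N => f j (x i)).det‖ ^ 2
          ∂(Measure.pi fun _ : Fin N => μ) : ℝ) : ℂ) =
      (Nat.factorial N : ℂ) *
        (Matrix.of fun i j : Fin N =>
          ∫ x, f i x * (starRingEnd ℂ) (f j x) ∂μ).det := by
  obtain ⟨S, hS, hfS, hSσ⟩ := exists_sigmaFinite_restrict_of_memLp two_ne_zero
    ENNReal.ofNat_ne_top (fun j => (hmeas j).stronglyMeasurable) hL2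
  have hslater : ∀ x ∉ Set.univ.pi fun _ => S,
      ‖(Matrix.of fun i j : Fin N => f j (x i)).det‖ ^ 2 = 0 := fun x hx => by
    obtain ⟨i, hi⟩ := not_forall.1 (Set.mem_univ_pi.not.1 hx)
    rw [Matrix.det_eq_zero_of_row_eq_zero i fun j => hfS j (x i) hi, norm_zero, sq, zero_mul]
  have hgram (i j : Fin N) : ∫ x, f i x * (starRingEnd ℂ) (f j x) ∂μ =
      ∫ x, f i x * (starRingEnd ℂ) (f j x) ∂μ.restrict S :=
    (setIntegral_eq_integral_of_forall_compl_eq_zero fun x hx => by simp [hfS i x hx]).symm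
  rw [Measure.integral_pi_eq_integral_pi_restrict _ (fun _ => hS) hslater]
  refine (integral_norm_det_sq_eq_factorial_mul_det (μ.restrict S)
    fun j => (hL2 j).restrict S).trans ?_
  simp_rw [hgram, Fintype.card_fin]

/-- Andreief identity: the `L²`-integral of the squared Slater determinant equals
`N !` times the determinant of the Gram matrix. -/
theorem andreief_identity {X : Type*} [MeasurableSpace X] (μ : Measure X)
    (N : ℕ) (hN : 0 < N) (f : Fin N → X → ℂ)
    (hmeas : ∀ j, Measurable (f j))
    (hL2 : ∀ j, MemLp (f j) 2 μ) :
    ((∫ x : Fin N → X,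
        ‖(Matrix.of fun i j : Fin N => f j (x i)).det‖ ^ 2
          ∂(Measure.pi fun _ : Fin N => μ) : ℝ) : ℂ) =
      (Nat.factorial N : ℂ) *
        (Matrix.of fun i j : Fin N =>
          ∫ x, f i x * (starRingEnd ℂ) (f j x) ∂μ).det :=
  andreief_identity_general μ N f hmeas hL2
end

section
/- Let (X, μ) be a measure space, N a positive integer, and f_1, …, f_N : X → ℂ measurable functions forming an orthonormal family in L²(X, μ), i.e. ∫_X f_i(x) · conj(f_j(x)) dμ(x) = δ_{ij}. Then the measure ν_N on X^N with density (x_1, …, x_N) ↦ (1/N!) · |det (f_j(x_i))_{i,j=1}^N|² with respect to μ^{⊗N} is a probability measure, i.e. ∫_{X^N} (1/N!) · |det (f_j(x_i))_{i,j=1}^N|² dμ(x_1) ⋯ dμ(x_N) = 1. -/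
/-!
Write `D(x) = det (f_j(x_i))`. By the Leibniz formula, `|D(x)|²` is the double sum over
permutations `σ, τ` of `sign σ · sign τ · ∏ᵢ f_{σ i}(x_i) · conj f_{τ i}(x_i)`. By Fubini each
summand integrates to `∏ᵢ ⟨f_{σ i}, f_{τ i}⟩ = δ_{στ}`, so `∫ |D|² = N!`.

Fubini needs `μ` to be σ-finite. This costs nothing: the `f_j` vanish outside
`S = ⋃ⱼ {f_j ≠ 0}`, on which `μ` is σ-finite because the `f_j` are in `L²`, and the density
vanishes off `Sᴺ`, where the product measure agrees with the product of the restrictions of `μ`.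
-/

open MeasureTheory Complex Set
open scoped ENNReal NNReal ComplexConjugate

namespace MeasureTheory.Measure

variable {ι : Type*} [Fintype ι] {α : ι → Type*} [∀ i, MeasurableSpace (α i)]

theorem pi_mono {μ ν : ∀ i, Measure (α i)} (h : ∀ i, μ i ≤ ν i) :
    Measure.pi μ ≤ Measure.pi ν := by
  refine Measure.le_iff.2 fun s hs => ?_
  simp only [Measure.pi_def, toMeasure_apply _ _ hs]
  refine OuterMeasure.le_pi.2 (fun t _ => ?_) s
  exact (OuterMeasure.pi_pi_le _ t).trans (Finset.prod_le_prod' fun i _ => h i (t i))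

theorem restrict_univ_pi_le_pi_restrict (μ : ∀ i, Measure (α i)) {s : ∀ i, Set (α i)}
    (hs : ∀ i, MeasurableSet (s i)) :
    (Measure.pi μ).restrict (univ.pi s) ≤ Measure.pi fun i => (μ i).restrict (s i) := by
  refine Measure.le_iff.2 fun t ht => ?_
  rw [restrict_apply ht]
  simp only [Measure.pi_def, toMeasure_apply _ _ ht,
    toMeasure_apply _ _ (ht.inter (MeasurableSet.univ_pi hs))]
  have key : (OuterMeasure.pi fun i => (μ i).toOuterMeasure).restrict (univ.pi s) ≤
      OuterMeasure.pi fun i => ((μ i).restrict (s i)).toOuterMeasure := by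
    refine OuterMeasure.le_pi.2 fun u _ => ?_
    rw [OuterMeasure.restrict_apply, ← pi_inter_distrib]
    refine (OuterMeasure.pi_pi_le _ _).trans (Finset.prod_le_prod' fun i _ => ?_)
    exact (restrict_apply' (hs i)).ge
  simpa only [OuterMeasure.restrict_apply] using key t

theorem lintegral_pi_restrict_of_forall_notMem_eq_zero (μ : ∀ i, Measure (α i))
    {s : ∀ i, Set (α i)} (hs : ∀ i, MeasurableSet (s i)) {g : (∀ i, α i) → ℝ≥0∞}
    (hg : ∀ x ∉ univ.pi s, g x = 0) :
    ∫⁻ x, g x ∂(Measure.pi fun i => (μ i).restrict (s i)) = ∫⁻ x, g x ∂(Measure.pi μ) := by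
  refine le_antisymm (lintegral_mono' (pi_mono fun i => restrict_le_self) le_rfl) ?_
  calc ∫⁻ x, g x ∂(Measure.pi μ)
      = ∫⁻ x in univ.pi s, g x ∂(Measure.pi μ) :=
        (setLIntegral_eq_of_support_subset fun x hx => not_imp_comm.1 (hg x) hx).symm
    _ ≤ _ := lintegral_mono' (restrict_univ_pi_le_pi_restrict μ hs) le_rfl

end MeasureTheory.Measure

theorem Matrix.det_mul_conj_det {n : Type*} [Fintype n] [DecidableEq n] (A : Matrix n n ℂ) :
    A.det * conj A.det = ∑ σ : Equiv.Perm n, ∑ τ : Equiv.Perm n,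
      ((Equiv.Perm.sign σ : ℂ) * Equiv.Perm.sign τ) * ∏ i, A i (σ i) * conj (A i (τ i)) := by
  rw [← Matrix.det_transpose, Matrix.det_apply', map_sum, Finset.sum_mul_sum]
  refine Finset.sum_congr rfl fun σ _ => Finset.sum_congr rfl fun τ _ => ?_
  simp only [map_mul, map_prod, map_intCast, Matrix.transpose_apply, Finset.prod_mul_distrib]
  ring

namespace MeasureTheory

variable {X : Type*} [MeasurableSpace X] {μ : Measure X}

theorem MemLp.sigmaFinite_restrict_support {E : Type*} [NormedAddCommGroup E]
    [MeasurableSpace E] [MeasurableSingletonClass E] {p : ℝ≥0∞} {g : X → E}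
    (hg_meas : Measurable g) (hg : MemLp g p μ) (hp₀ : p ≠ 0) (hp : p ≠ ∞) :
    SigmaFinite (μ.restrict (Function.support g)) := by
  have hS := measurableSet_support hg_meas
  refine ⟨⟨⟨fun n : ℕ => (Function.support g)ᶜ ∪ {y | ((n : ℝ≥0) + 1)⁻¹ ≤ ‖g y‖₊},
    fun _ => trivial, fun n => ?_, ?_⟩⟩⟩
  · refine (measure_union_le _ _).trans_lt ?_
    rw [Measure.restrict_apply' hS, compl_inter_self, measure_empty, zero_add]
    exact (Measure.le_iff'.1 Measure.restrict_le_self _).trans_lt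
      (hg.meas_ge_lt_top hp₀ hp (by positivity))
  · refine eq_univ_of_forall fun y => ?_
    by_cases hy : g y = 0
    · exact mem_iUnion.2 ⟨0, Or.inl (Function.notMem_support.2 hy)⟩
    · obtain ⟨n, hn⟩ := exists_nat_ge (‖g y‖₊)⁻¹
      refine mem_iUnion.2 ⟨n, Or.inr (inv_le_of_inv_le₀ (nnnorm_pos.2 hy) ?_)⟩
      exact hn.trans (le_add_of_nonneg_right zero_le_one)

theorem sigmaFinite_restrict_iUnion {ι : Type*} [Finite ι] {s : ι → Set X}
    [∀ i, SigmaFinite (μ.restrict (s i))] : SigmaFinite (μ.restrict (⋃ i, s i)) :=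
  Measure.sigmaFinite_of_le _ Measure.restrict_iUnion_le

variable {ι : Type*} {f : ι → X → ℂ}

theorem integrable_prod_mul_conj [SigmaFinite μ] {κ : Type*} [Fintype κ]
    (hL2 : ∀ i, MemLp (f i) 2 μ) (σ τ : κ → ι) :
    Integrable (fun x => ∏ k, f (σ k) (x k) * conj (f (τ k) (x k)))
      (Measure.pi fun _ : κ => μ) :=
  Integrable.fintype_prod fun k => (hL2 (σ k)).integrable_mul (hL2 (τ k)).star

variable [DecidableEq ι]

theorem integral_prod_mul_conj_of_orthonormal [SigmaFinite μ] {κ : Type*} [Fintype κ]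
    (horth : ∀ i j, ∫ x, f i x * conj (f j x) ∂μ = if i = j then 1 else 0) (σ τ : κ → ι) :
    ∫ x, ∏ k, f (σ k) (x k) * conj (f (τ k) (x k)) ∂(Measure.pi fun _ : κ => μ) =
      if σ = τ then 1 else 0 := by
  rw [integral_fintype_prod_eq_prod (fun k y => f (σ k) y * conj (f (τ k) y))]
  simp only [horth]
  split_ifs with h
  · simp [h]
  · obtain ⟨k, hk⟩ := Function.ne_iff.1 h
    exact Finset.prod_eq_zero (Finset.mem_univ k) (if_neg hk)

variable [Fintype ι]

theorem integrable_det_mul_conj [SigmaFinite μ] (hL2 : ∀ i, MemLp (f i) 2 μ) :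
    Integrable (fun x : ι → X => (Matrix.of fun i j => f j (x i)).det *
      conj (Matrix.of fun i j => f j (x i)).det) (Measure.pi fun _ => μ) := by
  simp only [Matrix.det_mul_conj_det, Matrix.of_apply]
  exact integrable_finsetSum _ fun σ _ => integrable_finsetSum _ fun τ _ =>
    (integrable_prod_mul_conj hL2 σ τ).const_mul _

theorem integral_det_mul_conj_of_orthonormal [SigmaFinite μ] (hL2 : ∀ i, MemLp (f i) 2 μ)
    (horth : ∀ i j, ∫ x, f i x * conj (f j x) ∂μ = if i = j then 1 else 0) :
    ∫ x : ι → X, (Matrix.of fun i j => f j (x i)).det *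
      conj (Matrix.of fun i j => f j (x i)).det ∂(Measure.pi fun _ => μ) =
      (Fintype.card ι).factorial := by
  simp only [Matrix.det_mul_conj_det, Matrix.of_apply]
  have hint : ∀ σ τ : Equiv.Perm ι, Integrable (fun x : ι → X =>
      ((Equiv.Perm.sign σ : ℂ) * Equiv.Perm.sign τ) * ∏ i, f (σ i) (x i) * conj (f (τ i) (x i)))
      (Measure.pi fun _ => μ) := fun σ τ => (integrable_prod_mul_conj hL2 σ τ).const_mul _
  have hterm : ∀ σ τ : Equiv.Perm ι, ∫ x : ι → X,
      ((Equiv.Perm.sign σ : ℂ) * Equiv.Perm.sign τ) * ∏ i, f (σ i) (x i) * conj (f (τ i) (x i))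
      ∂(Measure.pi fun _ => μ) = if σ = τ then 1 else 0 := by
    intro σ τ
    simp only [integral_const_mul, integral_prod_mul_conj_of_orthonormal horth, Equiv.coe_inj]
    split_ifs with h
    · rw [h, mul_one, ← Int.cast_mul, ← Units.val_mul, Int.units_mul_self, Units.val_one,
        Int.cast_one]
    · rw [mul_zero]
  rw [integral_finsetSum _ fun σ _ => integrable_finsetSum _ fun τ _ => hint σ τ]
  simp_rw [integral_finsetSum _ fun τ _ => hint _ τ, hterm, Finset.sum_ite_eq,
    Finset.mem_univ, if_true, Finset.sum_const, Finset.card_univ, Fintype.card_perm,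
    nsmul_eq_mul, mul_one]

theorem lintegral_ofReal_norm_det_sq_of_orthonormal [SigmaFinite μ]
    (hL2 : ∀ i, MemLp (f i) 2 μ)
    (horth : ∀ i j, ∫ x, f i x * conj (f j x) ∂μ = if i = j then 1 else 0) :
    ∫⁻ x : ι → X, ENNReal.ofReal (‖(Matrix.of fun i j => f j (x i)).det‖ ^ 2)
      ∂(Measure.pi fun _ => μ) = (Fintype.card ι).factorial := by
  have hint : Integrable (fun x : ι → X => ‖(Matrix.of fun i j => f j (x i)).det‖ ^ 2)
      (Measure.pi fun _ => μ) := by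
    simpa only [norm_mul, norm_conj, ← sq] using (integrable_det_mul_conj hL2).norm
  have hval : ∫ x : ι → X, ‖(Matrix.of fun i j => f j (x i)).det‖ ^ 2 ∂(Measure.pi fun _ => μ) =
      (Fintype.card ι).factorial := by
    apply ofReal_injective
    rw [← integral_complex_ofReal]
    push_cast
    simp only [← mul_conj', integral_det_mul_conj_of_orthonormal hL2 horth]
  rw [← ofReal_integral_eq_lintegral_ofReal hint (ae_of_all _ fun x => by positivity), hval,
    ENNReal.ofReal_natCast]

theorem lintegral_determinantal_density_of_orthonormal [SigmaFinite μ]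
    (hL2 : ∀ i, MemLp (f i) 2 μ)
    (horth : ∀ i j, ∫ x, f i x * conj (f j x) ∂μ = if i = j then 1 else 0) :
    ∫⁻ x : ι → X, ENNReal.ofReal (((Fintype.card ι).factorial : ℝ)⁻¹ *
      ‖(Matrix.of fun i j => f j (x i)).det‖ ^ 2) ∂(Measure.pi fun _ => μ) = 1 := by
  have hfact : (0 : ℝ) < (Fintype.card ι).factorial := by positivity
  simp_rw [ENNReal.ofReal_mul (inv_nonneg.2 hfact.le)]
  rw [lintegral_const_mul' _ _ ENNReal.ofReal_ne_top,
    lintegral_ofReal_norm_det_sq_of_orthonormal hL2 horth, ENNReal.ofReal_inv_of_pos hfact,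
    ENNReal.ofReal_natCast, ENNReal.inv_mul_cancel (by positivity) (ENNReal.natCast_ne_top _)]

end MeasureTheory

theorem determinantal_isProbabilityMeasure_general {X : Type*} [MeasurableSpace X]
    (μ : Measure X) (N : ℕ) (f : Fin N → X → ℂ)
    (hmeas : ∀ j, Measurable (f j))
    (hL2 : ∀ j, MemLp (f j) 2 μ)
    (horth : ∀ i j, (∫ x, f i x * (starRingEnd ℂ) (f j x) ∂μ) =
      if i = j then 1 else 0) :
    IsProbabilityMeasure
      ((Measure.pi fun _ : Fin N => μ).withDensity fun x =>
        ENNReal.ofReal ((Nat.factorial N : ℝ)⁻¹ *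
          ‖(Matrix.of fun i j : Fin N => f j (x i)).det‖ ^ 2)) := by
  set S := ⋃ j, Function.support (f j)
  have hS : MeasurableSet S := MeasurableSet.iUnion fun j => measurableSet_support (hmeas j)
  have hvanish : ∀ y ∉ S, ∀ j, f j y = 0 := fun y hy j =>
    Function.notMem_support.1 fun h => hy (mem_iUnion.2 ⟨j, h⟩)
  have : ∀ j, SigmaFinite (μ.restrict (Function.support (f j))) := fun j =>
    (hL2 j).sigmaFinite_restrict_support (hmeas j) two_ne_zero ENNReal.ofNat_ne_top
  have : SigmaFinite (μ.restrict S) := sigmaFinite_restrict_iUnion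
  have horthS : ∀ i j, ∫ x, f i x * conj (f j x) ∂(μ.restrict S) = if i = j then 1 else 0 :=
    fun i j => by
      rw [setIntegral_eq_integral_of_forall_compl_eq_zero fun y hy => by simp [hvanish y hy i]]
      exact horth i j
  have hdensity : ∀ x ∉ univ.pi fun _ => S, ENNReal.ofReal ((Nat.factorial N : ℝ)⁻¹ *
      ‖(Matrix.of fun i j : Fin N => f j (x i)).det‖ ^ 2) = 0 := fun x hx => by
    obtain ⟨i, hi⟩ : ∃ i, x i ∉ S := by simpa using hx
    rw [Matrix.det_eq_zero_of_row_eq_zero i fun j => hvanish (x i) hi j]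
    simp
  constructor
  rw [withDensity_apply _ MeasurableSet.univ, Measure.restrict_univ,
    ← Measure.lintegral_pi_restrict_of_forall_notMem_eq_zero _ (fun _ => hS) hdensity]
  simpa using lintegral_determinantal_density_of_orthonormal
    (fun j => (hL2 j).restrict S) horthS

/-- The determinantal point process associated with an orthonormal family of `N`
square-integrable functions is a probability measure on `X^N`. -/
theorem determinantal_isProbabilityMeasure {X : Type*} [MeasurableSpace X]
    (μ : Measure X) (N : ℕ) (hN : 0 < N) (f : Fin N → X → ℂ)
    (hmeas : ∀ j, Measurable (f j))
    (hL2 : ∀ j, MemLp (f j) 2 μ)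
    (horth : ∀ i j, (∫ x, f i x * (starRingEnd ℂ) (f j x) ∂μ) =
      if i = j then 1 else 0) :
    IsProbabilityMeasure
      ((Measure.pi fun _ : Fin N => μ).withDensity fun x =>
        ENNReal.ofReal ((Nat.factorial N : ℝ)⁻¹ *
          ‖(Matrix.of fun i j : Fin N => f j (x i)).det‖ ^ 2)) :=
  determinantal_isProbabilityMeasure_general μ N f hmeas hL2 horth
end

section
/- (Euler–Maclaurin estimate for weighted Gaussian Riemann sums) Let k be a nonnegative integer and let 0 < a₁ ≤ a₂ be real numbers. There exists a constant C > 0 such that for every integer p ≥ 1, every a ∈ [a₁, a₂], and every v ∈ ℝ, one has | ∑_{m=0}^∞ (m/√p)^k · exp(−2π (v − m/(a√p))²) − a^{k+1} √p · ∫_{−∞}^v (v − t)^k exp(−2πt²) dt | ≤ C · (1 + |v|)^k. -/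
/-!
Substituting `t ↦ v - t` turns the integral into `∫_{t > 0} φ` with `φ t = t ^ k e^{-2π(v-t)²}`,
and with `h = 1 / (a √p)` the sum becomes `a ^ k ∑ₘ φ (m h)`, the integral term
`a ^ k h⁻¹ ∫_{t > 0} φ`. Comparing `φ (m h)` with the mean of `φ` over `[m h, (m + 1) h]` shows
that the left Riemann sum `h ∑ₘ φ (m h)` differs from `∫_{t > 0} φ` by at most `h ∫ |φ'|`,
uniformly in `h`. Finally `|t| ≤ (1 + |v|) (1 + |v - t|)` bounds `|φ'|` by `(1 + |v|) ^ k` times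
a fixed integrable Gaussian envelope centred at `v`.
-/

open Real MeasureTheory Set

section RiemannSum

variable {E : Type*} [NormedAddCommGroup E] [NormedSpace ℝ E] {f f' : ℝ → E}

theorem norm_smul_sub_intervalIntegral_le [CompleteSpace E] {x h : ℝ} (hh : 0 ≤ h)
    (hf : ∀ t ∈ Icc x (x + h), HasDerivAt f (f' t) t)
    (hf' : IntervalIntegrable f' volume x (x + h)) :
    ‖h • f x - ∫ t in x..x + h, f t‖ ≤ h * ∫ t in x..x + h, ‖f' t‖ := by
  have hxh : x ≤ x + h := le_add_of_nonneg_right hh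
  have hfc : ContinuousOn f (uIcc x (x + h)) := by
    rw [uIcc_of_le hxh]
    exact fun t ht => (hf t ht).continuousAt.continuousWithinAt
  have hdev : ∀ t ∈ uIoc x (x + h), ‖f x - f t‖ ≤ ∫ u in x..x + h, ‖f' u‖ := by
    intro t ht
    rw [uIoc_of_le hxh] at ht
    have hsub : Icc x t ⊆ Icc x (x + h) := Icc_subset_Icc_right ht.2
    have hft : f t - f x = ∫ u in x..t, f' u :=
      (intervalIntegral.integral_eq_sub_of_hasDerivAt
        (fun u hu => hf u (hsub (uIcc_of_le ht.1.le ▸ hu)))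
        (hf'.mono_set (by rw [uIcc_of_le ht.1.le, uIcc_of_le hxh]; exact hsub))).symm
    calc ‖f x - f t‖ = ‖∫ u in x..t, f' u‖ := by rw [norm_sub_rev, hft]
      _ ≤ ∫ u in x..t, ‖f' u‖ := intervalIntegral.norm_integral_le_integral_norm ht.1.le
      _ ≤ ∫ u in x..x + h, ‖f' u‖ :=
        intervalIntegral.integral_mono_interval le_rfl ht.1.le ht.2
          (ae_of_all _ fun _ => norm_nonneg _) hf'.norm
  have hsplit : h • f x - ∫ t in x..x + h, f t = ∫ t in x..x + h, (f x - f t) := by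
    rw [intervalIntegral.integral_sub intervalIntegrable_const (hfc.intervalIntegrable),
      intervalIntegral.integral_const, add_sub_cancel_left]
  rw [hsplit]
  calc ‖∫ t in x..x + h, (f x - f t)‖ ≤ (∫ u in x..x + h, ‖f' u‖) * |x + h - x| :=
        intervalIntegral.norm_integral_le_of_norm_le_const hdev
    _ = h * ∫ u in x..x + h, ‖f' u‖ := by rw [add_sub_cancel_left, abs_of_nonneg hh, mul_comm]

theorem hasSum_intervalIntegral_nat_mul {g : ℝ → E} {h : ℝ} (hh : 0 < h)
    (hg : IntegrableOn g (Ioi 0)) :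
    HasSum (fun m : ℕ => ∫ t in m * h..(m + 1) * h, g t) (∫ t in Ioi 0, g t) := by
  have hmono : Monotone fun m : ℕ => (m : ℝ) * h := fun m n hmn =>
    mul_le_mul_of_nonneg_right (Nat.cast_le.2 hmn) hh.le
  have hunbdd : ¬BddAbove (range fun m : ℕ => (m : ℝ) * h) := by
    rintro ⟨b, hb⟩
    obtain ⟨m, hm⟩ := exists_nat_gt (b / h)
    have := hb ⟨m, rfl⟩
    rw [div_lt_iff₀ hh] at hm
    linarith
  have hunion : (⋃ m : ℕ, Ioc ((m : ℝ) * h) ((Order.succ m : ℕ) * h)) = Ioi 0 := by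
    simpa only [Nat.bot_eq_zero, Nat.cast_zero, zero_mul] using
      iUnion_Ioc_map_succ_eq_Ioi (fun m => hmono bot_le) hunbdd
  have hcells := hasSum_integral_iUnion (fun m => measurableSet_Ioc)
    hmono.pairwise_disjoint_on_Ioc_succ (hunion ▸ hg)
  rw [hunion] at hcells
  refine hcells.congr_fun fun m => ?_
  rw [Order.succ_eq_add_one, Nat.cast_add_one, intervalIntegral.integral_of_le]
  simpa using hmono m.le_succ

theorem summable_and_norm_tsum_sub_integral_le [CompleteSpace E] {h : ℝ} (hh : 0 < h)
    (hf : ∀ t ∈ Ici 0, HasDerivAt f (f' t) t) (hfi : IntegrableOn f (Ioi 0))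
    (hf'i : IntegrableOn f' (Ioi 0)) :
    Summable (fun m : ℕ => f (m * h)) ∧
      ‖∑' m : ℕ, f (m * h) - h⁻¹ • ∫ t in Ioi 0, f t‖ ≤ ∫ t in Ioi 0, ‖f' t‖ := by
  have hI := hasSum_intervalIntegral_nat_mul hh hfi
  have hI' := hasSum_intervalIntegral_nat_mul hh hf'i.norm
  set e : ℕ → E := fun m => f (m * h) - h⁻¹ • ∫ t in m * h..(m + 1) * h, f t
  have he : ∀ m : ℕ, ‖e m‖ ≤ ∫ t in m * h..(m + 1) * h, ‖f' t‖ := by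
    intro m
    have hcell : (m + 1 : ℝ) * h = m * h + h := by ring
    have hmh : 0 ≤ (m : ℝ) * h := by positivity
    have hf'm : IntervalIntegrable f' volume (m * h) (m * h + h) :=
      (intervalIntegrable_iff_integrableOn_Ioc_of_le (by linarith)).2
        (hf'i.mono_set fun t ht => hmh.trans_lt ht.1)
    have hcell_le := norm_smul_sub_intervalIntegral_le hh.le
      (fun t ht => hf t (hmh.trans ht.1)) hf'm
    rw [← hcell] at hcell_le
    calc ‖e m‖ = h⁻¹ * ‖h • f (m * h) - ∫ t in m * h..(m + 1) * h, f t‖ := by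
          rw [← abs_of_pos (inv_pos.2 hh), ← Real.norm_eq_abs, ← norm_smul, smul_sub,
            inv_smul_smul₀ hh.ne']
      _ ≤ _ := by rwa [inv_mul_le_iff₀ hh]
  have hes : Summable e := Summable.of_norm_bounded hI'.summable he
  have hsum : Summable fun m : ℕ => f (m * h) :=
    (hes.add (hI.summable.const_smul h⁻¹)).congr fun m => by simp [e]
  refine ⟨hsum, ?_⟩
  rw [← hI.tsum_eq, ← tsum_const_smul'', ← hsum.tsum_sub (hI.summable.const_smul h⁻¹)]
  exact tsum_of_norm_bounded hI' he

end RiemannSum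

theorem setIntegral_Iic_eq_setIntegral_Ioi_sub {E : Type*} [NormedAddCommGroup E]
    [NormedSpace ℝ E] (g : ℝ → E) (v : ℝ) :
    ∫ t in Iic v, g t = ∫ s in Ioi 0, g (v - s) := by
  have hpre : (fun s : ℝ => v - s) ⁻¹' Iic v = Ici 0 := by ext; simp
  rw [← integral_Ici_eq_integral_Ioi, ← hpre,
    (Measure.measurePreserving_sub_left volume v).setIntegral_preimage_emb
      (MeasurableEquiv.subLeft v).measurableEmbedding]

theorem integrable_one_add_abs_pow_mul_exp_neg_mul_sq {b : ℝ} (hb : 0 < b) (n : ℕ) :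
    Integrable fun x : ℝ => (1 + |x|) ^ n * exp (-b * x ^ 2) := by
  have hmoment : ∀ j : ℕ, Integrable fun x : ℝ => |x| ^ j * exp (-b * x ^ 2) := fun j => by
    simpa [abs_mul, abs_of_pos (exp_pos _)] using
      (integrable_rpow_mul_exp_neg_mul_sq hb (s := j) (by linarith [j.cast_nonneg (α := ℝ)])).abs
  have hsum := integrable_finsetSum (Finset.range (n + 1))
    fun j _ => (hmoment j).const_mul (n.choose j : ℝ)
  refine hsum.congr (ae_of_all _ fun x => ?_)
  simp only [add_comm 1 |x|, add_pow, one_pow, mul_one, Finset.sum_mul]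
  exact Finset.sum_congr rfl fun j _ => by ring

theorem abs_le_mul_one_add_abs_sub (v t : ℝ) : |t| ≤ (1 + |v|) * (1 + |v - t|) := by
  have := abs_sub_le t v 0
  rw [sub_zero, sub_zero, abs_sub_comm] at this
  nlinarith [abs_nonneg v, abs_nonneg (v - t)]

noncomputable def weightedGaussian (k : ℕ) (v t : ℝ) : ℝ := t ^ k * exp (-2 * π * (v - t) ^ 2)

noncomputable def weightedGaussianDeriv (k : ℕ) (v t : ℝ) : ℝ :=
  (k * t ^ (k - 1) + 4 * π * (v - t) * t ^ k) * exp (-2 * π * (v - t) ^ 2)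

/-- The extra factor `1 + |s|` absorbs the `v - t` produced by differentiating the Gaussian. -/
noncomputable def gaussianEnvelope (k : ℕ) (s : ℝ) : ℝ := (1 + |s|) ^ (k + 1) * exp (-2 * π * s ^ 2)

theorem integrable_gaussianEnvelope (k : ℕ) : Integrable (gaussianEnvelope k) := by
  have := integrable_one_add_abs_pow_mul_exp_neg_mul_sq (mul_pos two_pos pi_pos) (k + 1)
  unfold gaussianEnvelope
  convert this using 4
  ring

namespace weightedGaussian

variable (k : ℕ) (v : ℝ)

theorem hasDerivAt (t : ℝ) :
    HasDerivAt (weightedGaussian k v) (weightedGaussianDeriv k v t) t := by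
  have hexp : HasDerivAt (fun t => -2 * π * (v - t) ^ 2) (4 * π * (v - t)) t :=
    ((((hasDerivAt_id t).const_sub v).pow 2).const_mul (-2 * π)).congr_deriv (by simp; ring)
  exact ((hasDerivAt_pow k t).mul hexp.exp).congr_deriv (by rw [weightedGaussianDeriv]; ring)

theorem abs_le (t : ℝ) :
    |weightedGaussian k v t| ≤ (1 + |v|) ^ k * gaussianEnvelope k (v - t) := by
  have hB : 1 ≤ 1 + |v - t| := by simp
  calc |weightedGaussian k v t| = |t| ^ k * exp (-2 * π * (v - t) ^ 2) := by
        rw [weightedGaussian, abs_mul, abs_pow, abs_of_pos (exp_pos _)]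
    _ ≤ ((1 + |v|) * (1 + |v - t|)) ^ k * exp (-2 * π * (v - t) ^ 2) := by
        gcongr; exact abs_le_mul_one_add_abs_sub v t
    _ ≤ (1 + |v|) ^ k * gaussianEnvelope k (v - t) := by
        rw [gaussianEnvelope, mul_pow, mul_assoc]
        gcongr
        exact k.le_succ

theorem abs_deriv_le (t : ℝ) :
    |weightedGaussianDeriv k v t| ≤ (k + 4 * π) * (1 + |v|) ^ k * gaussianEnvelope k (v - t) := by
  set B := 1 + |v - t|
  have hB : 1 ≤ B := by simp [B]
  have hWB : 1 ≤ (1 + |v|) * B := one_le_mul_of_one_le_of_one_le (by simp) hB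
  have hpoly : |k * t ^ (k - 1) + 4 * π * (v - t) * t ^ k| ≤
      (k + 4 * π) * B * ((1 + |v|) * B) ^ k := by
    calc |k * t ^ (k - 1) + 4 * π * (v - t) * t ^ k|
        ≤ k * |t| ^ (k - 1) + 4 * π * |v - t| * |t| ^ k := by
          refine (abs_add_le _ _).trans_eq ?_
          simp only [abs_mul, abs_pow, Nat.abs_cast, abs_of_pos pi_pos, Nat.abs_ofNat]
      _ ≤ k * ((1 + |v|) * B) ^ k + 4 * π * B * ((1 + |v|) * B) ^ k := by
          gcongr
          · exact (pow_le_pow_left₀ (abs_nonneg t) (abs_le_mul_one_add_abs_sub v t) _).trans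
              (pow_le_pow_right₀ hWB (k.sub_le 1))
          · simp [B]
          · exact abs_le_mul_one_add_abs_sub v t
      _ ≤ (k + 4 * π) * B * ((1 + |v|) * B) ^ k := by
          have hk : (k : ℝ) ≤ k * B := le_mul_of_one_le_right k.cast_nonneg hB
          have := mul_le_mul_of_nonneg_right hk (pow_nonneg (zero_le_one.trans hWB) k)
          linarith
  calc |weightedGaussianDeriv k v t|
      = |k * t ^ (k - 1) + 4 * π * (v - t) * t ^ k| * exp (-2 * π * (v - t) ^ 2) := by
        rw [weightedGaussianDeriv, abs_mul, abs_of_pos (exp_pos _)]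
    _ ≤ (k + 4 * π) * B * ((1 + |v|) * B) ^ k * exp (-2 * π * (v - t) ^ 2) := by gcongr
    _ = (k + 4 * π) * (1 + |v|) ^ k * gaussianEnvelope k (v - t) := by
        rw [gaussianEnvelope, mul_pow, pow_succ]; ring

theorem continuous : Continuous (weightedGaussian k v) :=
  continuous_iff_continuousAt.2 fun t => (hasDerivAt k v t).continuousAt

theorem integrable : Integrable (weightedGaussian k v) :=
  (((integrable_gaussianEnvelope k).comp_sub_left v).const_mul _).mono'
    (continuous k v).aestronglyMeasurable (ae_of_all _ fun t => abs_le k v t)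

theorem integrable_deriv : Integrable (weightedGaussianDeriv k v) :=
  (((integrable_gaussianEnvelope k).comp_sub_left v).const_mul _).mono'
    (by unfold weightedGaussianDeriv; fun_prop) (ae_of_all _ fun t => abs_deriv_le k v t)

theorem setIntegral_abs_deriv_le :
    ∫ t in Ioi 0, |weightedGaussianDeriv k v t| ≤
      (k + 4 * π) * (∫ s, gaussianEnvelope k s) * (1 + |v|) ^ k := by
  calc ∫ t in Ioi 0, |weightedGaussianDeriv k v t|
      ≤ ∫ t, |weightedGaussianDeriv k v t| :=
        setIntegral_le_integral (integrable_deriv k v).abs (ae_of_all _ fun _ => abs_nonneg _)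
    _ ≤ ∫ t, (k + 4 * π) * (1 + |v|) ^ k * gaussianEnvelope k (v - t) :=
        integral_mono (integrable_deriv k v).abs
          (((integrable_gaussianEnvelope k).comp_sub_left v).const_mul _) (abs_deriv_le k v)
    _ = (k + 4 * π) * (∫ s, gaussianEnvelope k s) * (1 + |v|) ^ k := by
        rw [integral_const_mul, integral_sub_left_eq_self]; ring

theorem summable_and_abs_tsum_sub_integral_le {h : ℝ} (hh : 0 < h) :
    Summable (fun m : ℕ => weightedGaussian k v (m * h)) ∧
      |∑' m : ℕ, weightedGaussian k v (m * h) - h⁻¹ * ∫ t in Ioi 0, weightedGaussian k v t| ≤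
        (k + 4 * π) * (∫ s, gaussianEnvelope k s) * (1 + |v|) ^ k := by
  obtain ⟨hsum, hle⟩ := summable_and_norm_tsum_sub_integral_le hh
    (fun t _ => hasDerivAt k v t) (integrable k v).integrableOn (integrable_deriv k v).integrableOn
  exact ⟨hsum, hle.trans (setIntegral_abs_deriv_le k v)⟩

end weightedGaussian

/-- Euler–Maclaurin estimate for weighted Gaussian Riemann sums, uniform in
`v ∈ ℝ` and `a ∈ [a₁, a₂] ⊂ (0, ∞)`. -/
theorem euler_maclaurin_weighted_gaussian_sum (k : ℕ) (a₁ a₂ : ℝ)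
    (ha₁ : 0 < a₁) (ha : a₁ ≤ a₂) :
    ∃ C > 0, ∀ p : ℕ, 1 ≤ p → ∀ a ∈ Set.Icc a₁ a₂, ∀ v : ℝ,
      |(∑' m : ℕ, ((m : ℝ) / Real.sqrt p) ^ k *
            Real.exp (-2 * Real.pi * (v - m / (a * Real.sqrt p)) ^ 2)) -
          a ^ (k + 1) * Real.sqrt p *
            (∫ t in Set.Iic v, (v - t) ^ k * Real.exp (-2 * Real.pi * t ^ 2))| ≤
        C * (1 + |v|) ^ k := by
  set D := (k + 4 * π) * ∫ s, gaussianEnvelope k s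
  have hD : 0 ≤ D := mul_nonneg (by positivity)
    (integral_nonneg fun s => by unfold gaussianEnvelope; positivity)
  have ha₂ : 0 < a₂ := ha₁.trans_le ha
  refine ⟨a₂ ^ k * D + 1, by positivity, fun p hp a ⟨ha₁a, ha₂a⟩ v => ?_⟩
  have ha0 : 0 < a := ha₁.trans_le ha₁a
  have hsqrt : 0 < √(p : ℝ) := Real.sqrt_pos.2 (by exact_mod_cast hp)
  set h := (a * √(p : ℝ))⁻¹ with h_def
  have hsum : ∀ m : ℕ, ((m : ℝ) / √(p : ℝ)) ^ k * exp (-2 * π * (v - m / (a * √(p : ℝ))) ^ 2) =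
      a ^ k * weightedGaussian k v (m * h) := fun m => by
    rw [weightedGaussian, ← mul_assoc, ← mul_pow]
    congr 3
    rw [h_def]
    field_simp
  have hint : a ^ (k + 1) * √(p : ℝ) * ∫ t in Iic v, (v - t) ^ k * exp (-2 * π * t ^ 2) =
      a ^ k * (h⁻¹ * ∫ t in Ioi 0, weightedGaussian k v t) := by
    simp only [setIntegral_Iic_eq_setIntegral_Ioi_sub, sub_sub_cancel, weightedGaussian, h, inv_inv]
    ring
  rw [tsum_congr hsum, tsum_mul_left, hint, ← mul_sub, abs_mul, abs_of_pos (pow_pos ha0 k)]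
  calc a ^ k * |∑' m : ℕ, weightedGaussian k v (m * h) - h⁻¹ * ∫ t in Ioi 0, weightedGaussian k v t|
      ≤ a₂ ^ k * (D * (1 + |v|) ^ k) := by
        gcongr
        exact (weightedGaussian.summable_and_abs_tsum_sub_integral_le k v (by positivity)).2
    _ ≤ (a₂ ^ k * D + 1) * (1 + |v|) ^ k := by
        rw [← mul_assoc]
        gcongr
        linarith
end

section
/- (Shifted Gaussian sum expansion) Let 0 < a₁ ≤ a₂ be real numbers. There exists a constant C > 0 such that for every integer p ≥ 1, every a ∈ [a₁, a₂], every integer k ∈ ℤ, and every v ∈ ℝ, one has | ∑_{m=0}^∞ exp(−2π [ (v − m/(a√p))² + (v − (m − k)/(a√p))² ]) − ∑_{m=0}^∞ exp(−4π (v − m/(a√p))²) − (k/2) exp(−4πv²) | ≤ C · k² · p^{−1/2}. -/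
/-!
Put `h = 1 / (a √p)` and `g t = exp (-4π (v - h t)²)`. Completing the square,
`(v - m h)² + (v - (m - k) h)² = 2 (v - (m - k/2) h)² + k² h² / 2`, so the first sum is
`exp (-π k² h²) · S (k/2)` with `S c = ∑_{n ≥ 0} g (n - c)`. Lattice sums of a Gaussian of width
`1/h` are `O(1/h)`, so replacing the prefactor by `1` costs `O(k² h)`, and it remains to compare
`S (k/2)` with `S 0`.

An integer shift moves single terms across the boundary `n = 0`: `S (c + 1) = g (-1 - c) + S c`,
and since `g` is `8πh`-Lipschitz each such term is `g 0 + O(h (1 + |c|))`. For the remaining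
half shift, `2 S (1/2) - 2 S 0 - g 0` equals `g (-1) - g 0 = O(h)` minus the sum of the second
differences `g n + g (n - 1) - 2 g (n - 1/2)`; each is `O(h²)` times a Gaussian envelope in
`v - h n`, whose lattice sum is again `O(1/h)`.
-/

open Real Finset

lemma inv_one_sub_exp_neg_le {h : ℝ} (hh : 0 < h) : (1 - exp (-h))⁻¹ ≤ 1 + 1 / h := by
  have hle : exp (-h) * (1 + h) ≤ 1 :=
    calc exp (-h) * (1 + h) ≤ exp (-h) * exp h := by gcongr; linarith [add_one_le_exp h]
      _ = 1 := by rw [← exp_add, neg_add_cancel, exp_zero]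
  rw [inv_le_iff_one_le_mul₀ (by nlinarith [exp_pos (-h)]), one_add_div hh.ne',
    div_mul_eq_mul_div, le_div_iff₀ hh]
  linarith

lemma exp_neg_mul_abs_le_pow {h : ℝ} (hh : 0 < h) {n : ℕ} {t : ℝ} (ht : n ≤ |t|) :
    exp (-(h * |t|)) ≤ exp (-h) ^ n := by
  rw [← exp_nat_mul, exp_le_exp]
  nlinarith

lemma natCast_le_abs_add_ceil_sub (n : ℕ) (x : ℝ) : (n : ℝ) ≤ |((n + ⌈x⌉₊ : ℕ) : ℝ) - x| := by
  rw [le_abs]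
  left
  push_cast
  linarith [Nat.le_ceil x]

lemma summable_geometric_exp_neg {h : ℝ} (hh : 0 < h) : Summable fun n : ℕ => exp (-h) ^ n :=
  summable_geometric_of_lt_one (exp_pos _).le (exp_lt_one_iff.mpr (by linarith))

lemma summable_exp_neg_mul_abs_sub {h : ℝ} (hh : 0 < h) (x : ℝ) :
    Summable fun n : ℕ => exp (-(h * |n - x|)) :=
  (summable_nat_add_iff ⌈x⌉₊).mp <| (summable_geometric_exp_neg hh).of_nonneg_of_le
    (fun _ => (exp_pos _).le) fun n =>
      exp_neg_mul_abs_le_pow hh (by exact_mod_cast natCast_le_abs_add_ceil_sub n x)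

lemma tsum_exp_neg_mul_abs_sub_le {h : ℝ} (hh : 0 < h) (x : ℝ) :
    ∑' n : ℕ, exp (-(h * |n - x|)) ≤ 2 * (1 + 1 / h) := by
  set N := ⌈x⌉₊
  have hgeom_eq : ∑' n : ℕ, exp (-h) ^ n = (1 - exp (-h))⁻¹ :=
    tsum_geometric_of_lt_one (exp_pos _).le (exp_lt_one_iff.mpr (by linarith))
  have head : ∑ i ∈ range N, exp (-(h * |i - x|)) ≤ (1 - exp (-h))⁻¹ := by
    rw [← sum_range_reflect, ← hgeom_eq]
    refine le_trans (sum_le_sum fun i hi => exp_neg_mul_abs_le_pow hh ?_)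
      ((summable_geometric_exp_neg hh).sum_le_tsum _ fun i _ => by positivity)
    rw [mem_range] at hi
    have hxN : (N : ℝ) < x + 1 := Nat.ceil_lt_add_one (Nat.ceil_pos.mp (by omega)).le
    rw [abs_sub_comm, le_abs]
    left
    rw [Nat.cast_sub (by omega : i ≤ N - 1), Nat.cast_sub (by omega : 1 ≤ N)]
    push_cast
    linarith
  have tail : ∑' n : ℕ, exp (-(h * |(n + N : ℕ) - x|)) ≤ (1 - exp (-h))⁻¹ := by
    rw [← hgeom_eq]
    exact Summable.tsum_le_tsum (fun n => exp_neg_mul_abs_le_pow hh (natCast_le_abs_add_ceil_sub n x))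
      ((summable_nat_add_iff N).mpr (summable_exp_neg_mul_abs_sub hh x))
      (summable_geometric_exp_neg hh)
  rw [← (summable_exp_neg_mul_abs_sub hh x).sum_add_tsum_nat_add N]
  linarith [inv_one_sub_exp_neg_le hh]

lemma exp_neg_mul_sq_le {κ : ℝ} (hκ : 0 < κ) (s : ℝ) :
    exp (-κ * s ^ 2) ≤ exp (1 / (4 * κ)) * exp (-|s|) := by
  rw [← exp_add, exp_le_exp, ← sq_abs s]
  have : 0 ≤ (2 * κ * |s| - 1) ^ 2 / (4 * κ) := by positivity
  rw [sub_sq, add_div, sub_div] at this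
  field_simp at this ⊢
  nlinarith

lemma exp_neg_mul_sq_sub_le {κ h : ℝ} (hκ : 0 < κ) (hh : 0 < h) (y : ℝ) (n : ℕ) :
    exp (-κ * (h * n - y) ^ 2) ≤ exp (1 / (4 * κ)) * exp (-(h * |n - y / h|)) := by
  have : |h * n - y| = h * |n - y / h| := by
    rw [← abs_of_pos hh, ← abs_mul, abs_of_pos hh, mul_sub, mul_div_cancel₀ _ hh.ne']
  rw [← this]
  exact exp_neg_mul_sq_le hκ _

lemma summable_exp_neg_mul_sq_sub {κ h : ℝ} (hκ : 0 < κ) (hh : 0 < h) (y : ℝ) :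
    Summable fun n : ℕ => exp (-κ * (h * n - y) ^ 2) :=
  ((summable_exp_neg_mul_abs_sub hh (y / h)).mul_left _).of_nonneg_of_le (fun _ => (exp_pos _).le)
    (exp_neg_mul_sq_sub_le hκ hh y)

lemma tsum_exp_neg_mul_sq_sub_le {κ h : ℝ} (hκ : 0 < κ) (hh : 0 < h) (y : ℝ) :
    ∑' n : ℕ, exp (-κ * (h * n - y) ^ 2) ≤ exp (1 / (4 * κ)) * (2 * (1 + 1 / h)) := by
  refine (Summable.tsum_le_tsum (exp_neg_mul_sq_sub_le hκ hh y)
    (summable_exp_neg_mul_sq_sub hκ hh y)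
    ((summable_exp_neg_mul_abs_sub hh (y / h)).mul_left _)).trans ?_
  rw [tsum_mul_left]
  gcongr
  exact tsum_exp_neg_mul_abs_sub_le hh _

noncomputable def shiftSum (f : ℝ → ℝ) (c : ℝ) : ℝ := ∑' n : ℕ, f (n - c)

section shiftSum

variable {f : ℝ → ℝ}

lemma shiftSum_add_nat {c : ℝ} (hf : Summable fun n : ℕ => f (n - c)) (j : ℕ) :
    shiftSum f (c + j) = ∑ i ∈ range j, f (i - (c + j)) + shiftSum f c := by
  have hs : Summable fun n : ℕ => f (n - (c + j)) :=
    (summable_nat_add_iff j).mp (by simpa [add_sub_add_right_eq_sub] using hf)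
  rw [shiftSum, shiftSum, ← hs.sum_add_tsum_nat_add j]
  congr 2 with n
  push_cast
  ring_nf

variable {K : NNReal}

lemma abs_shiftSum_add_nat_sub_le (hK : LipschitzWith K f) {c : ℝ}
    (hf : Summable fun n : ℕ => f (n - c)) (j : ℕ) :
    |shiftSum f (c + j) - shiftSum f c - j * f 0| ≤ K * j * (|c| + j) := by
  have hconst : (j : ℝ) * f 0 = ∑ _i ∈ range j, f 0 := by simp
  rw [shiftSum_add_nat hf, add_sub_cancel_right, hconst, ← sum_sub_distrib]
  refine (abs_sum_le_sum_abs _ _).trans ?_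
  calc ∑ i ∈ range j, |f (i - (c + j)) - f 0|
      ≤ ∑ _i ∈ range j, K * (|c| + j) := by
        refine sum_le_sum fun i hi => ?_
        have hij : (i : ℝ) < j := by exact_mod_cast mem_range.mp hi
        rw [← Real.dist_eq]
        refine (hK.dist_le_mul _ _).trans (mul_le_mul_of_nonneg_left ?_ K.2)
        rw [Real.dist_eq, sub_zero, abs_le]
        constructor <;> linarith [neg_abs_le c, le_abs_self c, (Nat.cast_nonneg i : (0:ℝ) ≤ i)]
    _ = K * j * (|c| + j) := by rw [sum_const, card_range, nsmul_eq_mul]; ring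

lemma abs_shiftSum_add_int_sub_le (hK : LipschitzWith K f)
    (hf : ∀ c, Summable fun n : ℕ => f (n - c)) (c : ℝ) (j : ℤ) :
    |shiftSum f (c + j) - shiftSum f c - j * f 0| ≤ K * |j| * (|c| + 2 * |j|) := by
  obtain ⟨m, rfl | rfl⟩ := Int.eq_nat_or_neg j
  · refine (abs_shiftSum_add_nat_sub_le hK (hf c) m).trans ?_
    simp only [Int.cast_natCast, Nat.abs_cast]
    gcongr
    linarith [(Nat.cast_nonneg m : (0:ℝ) ≤ m)]
  · have := abs_shiftSum_add_nat_sub_le hK (hf (c - m)) m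
    rw [sub_add_cancel, abs_sub_comm] at this
    push_cast
    rw [abs_neg, Nat.abs_cast, ← sub_eq_add_neg]
    refine le_trans (le_of_eq ?_) (this.trans ?_)
    · congr 1; ring
    · have : |c - m| ≤ |c| + m := by simpa using abs_sub c (m : ℝ)
      exact mul_le_mul_of_nonneg_left (by linarith) (by positivity)


lemma abs_shiftSum_half_sub_le (hK : LipschitzWith K f) (hf : ∀ c, Summable fun n : ℕ => f (n - c))
    {b : ℕ → ℝ} (hb : Summable b) (hfb : ∀ n : ℕ, |f n + f (n - 1) - 2 * f (n - 1 / 2)| ≤ b n) :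
    |shiftSum f (1 / 2) - shiftSum f 0 - f 0 / 2| ≤ ((∑' n, b n) + K) / 2 := by
  have hf0 : Summable fun n : ℕ => f n := by simpa using hf 0
  have hS0 : shiftSum f 0 = ∑' n : ℕ, f n := by simp [shiftSum]
  have hS1 : shiftSum f 1 = f (-1) + shiftSum f 0 := by
    simpa using shiftSum_add_nat (hf 0) 1
  have hdiff : ∑' n : ℕ, (f n + f (n - 1) - 2 * f (n - 1 / 2))
      = shiftSum f 0 + shiftSum f 1 - 2 * shiftSum f (1 / 2) := by
    rw [(hf0.add (hf 1)).tsum_sub ((hf _).mul_left 2), hf0.tsum_add (hf 1), tsum_mul_left, hS0,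
      shiftSum, shiftSum]
  have hB : |∑' n : ℕ, (f n + f (n - 1) - 2 * f (n - 1 / 2))| ≤ ∑' n, b n := by
    simpa only [Real.norm_eq_abs] using
      tsum_of_norm_bounded (f := fun n : ℕ => f n + f (n - 1) - 2 * f (n - 1 / 2)) hb.hasSum hfb
  have hL : |f (-1) - f 0| ≤ K := by
    rw [← Real.dist_eq]
    simpa using hK.dist_le_mul (-1) 0
  rw [hdiff, hS1] at hB
  rw [abs_le] at hB hL ⊢
  constructor <;> linarith

lemma abs_shiftSum_half_int_sub_le (hK : LipschitzWith K f)
    (hf : ∀ c, Summable fun n : ℕ => f (n - c)) {b : ℕ → ℝ} (hb : Summable b)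
    (hfb : ∀ n : ℕ, |f n + f (n - 1) - 2 * f (n - 1 / 2)| ≤ b n) (k : ℤ) :
    |shiftSum f (k / 2) - shiftSum f 0 - k / 2 * f 0| ≤ (3 * K + (∑' n, b n) / 2) * k ^ 2 := by
  obtain ⟨j, r, rfl, hr⟩ : ∃ j r : ℤ, k = 2 * j + r ∧ (r = 0 ∨ r = 1) :=
    ⟨k / 2, k % 2, by omega, by omega⟩
  have hr₀ : (0 : ℝ) ≤ r := by rcases hr with rfl | rfl <;> norm_num
  have hr₁ : (r : ℝ) ≤ 1 := by rcases hr with rfl | rfl <;> norm_num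
  have hjk : (j : ℝ) ^ 2 ≤ ((2 * j + r : ℤ) : ℝ) ^ 2 ∧ (r : ℝ) ≤ ((2 * j + r : ℤ) : ℝ) ^ 2 := by
    have hjj : 0 ≤ j * (j + 1) := by rcases le_or_gt 0 j with h | h <;> nlinarith
    have : j ^ 2 ≤ (2 * j + r) ^ 2 ∧ r ≤ (2 * j + r) ^ 2 := by
      rcases hr with rfl | rfl <;> constructor <;> nlinarith
    exact_mod_cast this
  have hj_abs : |(j : ℝ)| ≤ j ^ 2 := by
    exact_mod_cast abs_le.mpr ⟨by linarith [Int.le_self_sq (-j), neg_sq j], Int.le_self_sq j⟩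
  have hshift := abs_shiftSum_add_int_sub_le hK hf (r / 2) j
  have hhalf : |shiftSum f (r / 2) - shiftSum f 0 - r / 2 * f 0| ≤ r * (((∑' n, b n) + K) / 2) := by
    rcases hr with rfl | rfl
    · simp
    · simpa [div_eq_inv_mul] using abs_shiftSum_half_sub_le hK hf hb hfb
  have hB : 0 ≤ ∑' n, b n := tsum_nonneg fun n => (abs_nonneg _).trans (hfb n)
  have hK₀ : (0 : ℝ) ≤ K := K.coe_nonneg
  rw [abs_of_nonneg (by positivity : (0 : ℝ) ≤ r / 2), Int.cast_abs] at hshift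
  rw [show ((2 * j + r : ℤ) : ℝ) / 2 = r / 2 + j by push_cast; ring]
  calc |shiftSum f (r / 2 + j) - shiftSum f 0 - (r / 2 + j) * f 0|
      = |(shiftSum f (r / 2 + j) - shiftSum f (r / 2) - j * f 0)
          + (shiftSum f (r / 2) - shiftSum f 0 - r / 2 * f 0)| := by ring_nf
    _ ≤ K * |(j : ℝ)| * (r / 2 + 2 * |(j : ℝ)|) + r * (((∑' n, b n) + K) / 2) :=
      (abs_add_le _ _).trans (add_le_add hshift hhalf)
    _ ≤ (3 * K + (∑' n, b n) / 2) * ((2 * j + r : ℤ) : ℝ) ^ 2 := by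
      linarith [mul_le_mul_of_nonneg_left (sq_abs (j : ℝ)).le hK₀,
        mul_le_mul_of_nonneg_left hjk.1 hK₀, mul_le_mul_of_nonneg_left hjk.2 hK₀,
        mul_le_mul_of_nonneg_left hjk.2 hB,
        mul_le_mul_of_nonneg_left hj_abs hK₀,
        mul_le_mul_of_nonneg_left hr₁ (mul_nonneg hK₀ (abs_nonneg (j : ℝ)))]

end shiftSum

lemma abs_add_sub_two_mul_le_of_hasDerivAt {f f' f'' : ℝ → ℝ} {x δ M : ℝ}
    (hf : ∀ y, HasDerivAt f (f' y) y) (hf' : ∀ y, HasDerivAt f' (f'' y) y) (hδ : 0 ≤ δ)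
    (hM : ∀ y ∈ Set.Icc (x - δ) (x + δ), |f'' y| ≤ M) :
    |f (x + δ) + f (x - δ) - 2 * f x| ≤ 2 * M * δ ^ 2 := by
  have hf'_lip : ∀ t ∈ Set.Icc 0 δ, |f' (x + t) - f' (x - t)| ≤ 2 * M * δ := by
    intro t ⟨ht0, htδ⟩
    have := (convex_Icc (x - δ) (x + δ)).norm_image_sub_le_of_norm_hasDerivWithin_le
      (fun y _ => (hf' y).hasDerivWithinAt) hM
      ⟨by linarith, by linarith⟩ ⟨by linarith, by linarith⟩ (x := x - t) (y := x + t)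
    have hM0 : 0 ≤ M := (abs_nonneg _).trans (hM x ⟨by linarith, by linarith⟩)
    rw [Real.norm_eq_abs, Real.norm_eq_abs, add_sub_sub_cancel, ← two_mul,
      abs_of_nonneg (by positivity : (0 : ℝ) ≤ 2 * t)] at this
    nlinarith
  have hφ : ∀ t, HasDerivAt (fun t => f (x + t) + f (x - t)) (f' (x + t) - f' (x - t)) t := by
    intro t
    exact ((hf (x + t)).comp_const_add x t).add ((hf (x - t)).comp_const_sub x t)
  have := (convex_Icc 0 δ).norm_image_sub_le_of_norm_hasDerivWithin_le
    (fun t _ => (hφ t).hasDerivWithinAt) hf'_lip (Set.left_mem_Icc.mpr hδ)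
    (Set.right_mem_Icc.mpr hδ)
  simp only [add_zero, sub_zero, Real.norm_eq_abs, abs_of_nonneg hδ] at this
  rw [← two_mul] at this
  linarith

lemma hasDerivAt_exp_neg_four_pi_mul_sq (s : ℝ) :
    HasDerivAt (fun s => exp (-4 * π * s ^ 2)) (-8 * π * s * exp (-4 * π * s ^ 2)) s := by
  have := ((hasDerivAt_pow 2 s).const_mul (-4 * π)).exp
  convert this using 1
  ring

lemma hasDerivAt_mul_exp_neg_four_pi_mul_sq (s : ℝ) :
    HasDerivAt (fun s => -8 * π * s * exp (-4 * π * s ^ 2))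
      ((64 * π ^ 2 * s ^ 2 - 8 * π) * exp (-4 * π * s ^ 2)) s := by
  refine (((hasDerivAt_id s).const_mul (-8 * π)).mul
    (hasDerivAt_exp_neg_four_pi_mul_sq s)).congr_deriv ?_
  simp only [id, mul_one]
  ring

lemma abs_mul_exp_neg_four_pi_mul_sq_le (s : ℝ) : |s| * exp (-4 * π * s ^ 2) ≤ 1 := by
  have hs : |s| ≤ exp (4 * π * s ^ 2) := by
    nlinarith [add_one_le_exp (4 * π * s ^ 2), sq_abs s, abs_nonneg s, pi_gt_three,
      sq_nonneg (|s| - 1)]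
  calc |s| * exp (-4 * π * s ^ 2) ≤ exp (4 * π * s ^ 2) * exp (-4 * π * s ^ 2) := by gcongr
    _ = 1 := by rw [← exp_add]; ring_nf; exact exp_zero

lemma abs_exp_neg_four_pi_mul_sq_sub_le (s t : ℝ) :
    |exp (-4 * π * s ^ 2) - exp (-4 * π * t ^ 2)| ≤ 8 * π * |s - t| := by
  simpa only [Real.norm_eq_abs] using convex_univ.norm_image_sub_le_of_norm_hasDerivWithin_le
    (fun y _ => (hasDerivAt_exp_neg_four_pi_mul_sq y).hasDerivWithinAt)
    (fun y _ => by
      rw [Real.norm_eq_abs, abs_mul, abs_mul, abs_of_pos (exp_pos _), mul_assoc]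
      rw [show |-8 * π| = 8 * π by rw [abs_of_neg (by linarith [pi_pos])]; ring]
      nlinarith [abs_mul_exp_neg_four_pi_mul_sq_le y, pi_pos])
    (Set.mem_univ t) (Set.mem_univ s)

lemma abs_second_deriv_exp_neg_four_pi_mul_sq_le (s : ℝ) :
    |(64 * π ^ 2 * s ^ 2 - 8 * π) * exp (-4 * π * s ^ 2)| ≤ 40 * π * exp (-2 * π * s ^ 2) := by
  set x := 2 * π * s ^ 2
  have hx : 0 ≤ x := by positivity
  have hsplit : exp (-4 * π * s ^ 2) = exp (-x) * exp (-x) := by rw [← exp_add]; congr 1; ring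
  have hxe : x * exp (-x) ≤ 1 := by
    rw [← exp_zero, ← add_neg_cancel x, exp_add]
    gcongr
    linarith [add_one_le_exp x]
  rw [abs_mul, abs_of_pos (exp_pos _), hsplit, show -2 * π * s ^ 2 = -x by ring]
  have hpoly : |64 * π ^ 2 * s ^ 2 - 8 * π| ≤ 32 * π * x + 8 * π := by
    rw [abs_le]; constructor <;> nlinarith [pi_pos]
  have he : exp (-x) ≤ 1 := exp_le_one_iff.mpr (by linarith)
  have he0 := (exp_pos (-x)).le
  have hπ := pi_pos.le
  nlinarith [mul_le_mul_of_nonneg_right hpoly (mul_nonneg he0 he0),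
    mul_le_mul_of_nonneg_left hxe (by positivity : 0 ≤ 32 * π * exp (-x)),
    mul_le_mul_of_nonneg_left he (by positivity : 0 ≤ 8 * π * exp (-x))]

lemma exp_neg_two_pi_mul_sq_le {y s h : ℝ} (hy : |y - s| ≤ h) :
    exp (-2 * π * y ^ 2) ≤ exp (2 * π * h ^ 2) * exp (-π * s ^ 2) := by
  rw [← exp_add, exp_le_exp]
  have : (y - s) ^ 2 ≤ h ^ 2 := sq_le_sq' (abs_le.mp hy).1 (abs_le.mp hy).2
  nlinarith [pi_pos, sq_nonneg (2 * y - s)]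

section lattice

variable {h : ℝ} (v : ℝ)

lemma lipschitzWith_exp_neg_four_pi_mul_sub_sq (hh : 0 ≤ h) :
    LipschitzWith (Real.toNNReal (8 * π * h)) fun t => exp (-4 * π * (v - h * t) ^ 2) := by
  refine LipschitzWith.of_dist_le_mul fun t t' => ?_
  rw [Real.dist_eq, Real.dist_eq, Real.coe_toNNReal _ (by positivity)]
  refine (abs_exp_neg_four_pi_mul_sq_sub_le _ _).trans_eq ?_
  rw [show v - h * t - (v - h * t') = -h * (t - t') by ring, abs_mul, abs_neg, abs_of_nonneg hh]
  ring

lemma summable_exp_neg_four_pi_mul_sub_sq (hh : 0 < h) (c : ℝ) :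
    Summable fun n : ℕ => exp (-4 * π * (v - h * (n - c)) ^ 2) :=
  (summable_exp_neg_mul_sq_sub (κ := 4 * π) (by positivity) hh (v + h * c)).congr fun _ => by
    ring_nf

lemma shiftSum_exp_neg_four_pi_mul_sub_sq_le (hh : 0 < h) (c : ℝ) :
    shiftSum (fun t => exp (-4 * π * (v - h * t) ^ 2)) c
      ≤ exp (1 / (4 * (4 * π))) * (2 * (1 + 1 / h)) := by
  refine le_of_eq_of_le ?_ (tsum_exp_neg_mul_sq_sub_le (κ := 4 * π) (by positivity) hh (v + h * c))
  exact tsum_congr fun n => by ring_nf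

lemma abs_exp_neg_four_pi_mul_sub_sq_second_diff_le (hh : 0 ≤ h) (n : ℝ) :
    |exp (-4 * π * (v - h * n) ^ 2) + exp (-4 * π * (v - h * (n - 1)) ^ 2)
        - 2 * exp (-4 * π * (v - h * (n - 1 / 2)) ^ 2)|
      ≤ 20 * π * exp (2 * π * h ^ 2) * h ^ 2 * exp (-π * (v - h * n) ^ 2) := by
  have := abs_add_sub_two_mul_le_of_hasDerivAt hasDerivAt_exp_neg_four_pi_mul_sq
    hasDerivAt_mul_exp_neg_four_pi_mul_sq (x := v - h * (n - 1 / 2)) (by positivity : 0 ≤ h / 2)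
    (M := 40 * π * (exp (2 * π * h ^ 2) * exp (-π * (v - h * n) ^ 2))) fun y hy => by
      refine (abs_second_deriv_exp_neg_four_pi_mul_sq_le y).trans ?_
      gcongr
      refine exp_neg_two_pi_mul_sq_le (abs_le.mpr ⟨?_, ?_⟩) <;> linarith [hy.1, hy.2]
  rw [show v - h * (n - 1 / 2) + h / 2 = v - h * (n - 1) by ring,
    show v - h * (n - 1 / 2) - h / 2 = v - h * n by ring, add_comm] at this
  exact this.trans_eq (by ring)

end lattice

lemma exists_abs_shiftSum_exp_neg_four_pi_mul_sub_sq_sub_le {H : ℝ} (hH : 0 < H) :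
    ∃ C > 0, ∀ h, 0 < h → h ≤ H → ∀ (v : ℝ) (k : ℤ),
      |shiftSum (fun t => exp (-4 * π * (v - h * t) ^ 2)) (k / 2)
          - shiftSum (fun t => exp (-4 * π * (v - h * t) ^ 2)) 0 - k / 2 * exp (-4 * π * v ^ 2)|
        ≤ C * k ^ 2 * h := by
  refine ⟨24 * π + 20 * π * exp (2 * π * H ^ 2) * exp (1 / (4 * π)) * (H + 1),
    by positivity, fun h hh hhH v k => ?_⟩
  set A := 20 * π * exp (2 * π * h ^ 2) * h ^ 2 with hA
  have hb : Summable fun n : ℕ => A * exp (-π * (v - h * n) ^ 2) :=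
    ((summable_exp_neg_mul_sq_sub pi_pos hh v).mul_left A).congr fun n => by ring_nf
  have hB : ∑' n : ℕ, A * exp (-π * (v - h * n) ^ 2)
      ≤ 40 * π * exp (2 * π * H ^ 2) * exp (1 / (4 * π)) * (H + 1) * h := by
    have hsum : ∑' n : ℕ, exp (-π * (v - h * n) ^ 2) ≤ exp (1 / (4 * π)) * (2 * (1 + 1 / h)) :=
      le_of_eq_of_le (tsum_congr fun n => by ring_nf) (tsum_exp_neg_mul_sq_sub_le pi_pos hh v)
    have hexp : exp (2 * π * h ^ 2) ≤ exp (2 * π * H ^ 2) := by gcongr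
    rw [tsum_mul_left]
    calc A * ∑' n : ℕ, exp (-π * (v - h * n) ^ 2)
        ≤ A * (exp (1 / (4 * π)) * (2 * (1 + 1 / h))) := by gcongr
      _ = 40 * π * exp (2 * π * h ^ 2) * exp (1 / (4 * π)) * (h + 1) * h := by
        rw [hA]; field_simp; ring
      _ ≤ 40 * π * exp (2 * π * H ^ 2) * exp (1 / (4 * π)) * (H + 1) * h := by gcongr
  have := abs_shiftSum_half_int_sub_le (lipschitzWith_exp_neg_four_pi_mul_sub_sq v hh.le)
    (summable_exp_neg_four_pi_mul_sub_sq v hh) hb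
    (fun n => abs_exp_neg_four_pi_mul_sub_sq_second_diff_le v hh.le n) k
  simp only [mul_zero, sub_zero] at this
  refine this.trans ?_
  rw [Real.coe_toNNReal _ (by positivity)]
  nlinarith [sq_nonneg (k : ℝ)]

lemma abs_exp_neg_sub_one_le {x : ℝ} (hx : 0 ≤ x) : |exp (-x) - 1| ≤ x := by
  rw [abs_sub_comm, abs_of_nonneg (sub_nonneg.mpr (exp_le_one_iff.mpr (by linarith)))]
  linarith [add_one_le_exp (-x)]

lemma exists_abs_tsum_exp_shifted_sub_le {ℓ₀ : ℝ} (hℓ₀ : 0 < ℓ₀) :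
    ∃ C > 0, ∀ ℓ, ℓ₀ ≤ ℓ → ∀ (k : ℤ) (v : ℝ),
      |(∑' m : ℕ, exp (-2 * π * ((v - m / ℓ) ^ 2 + (v - (m - k) / ℓ) ^ 2)))
          - (∑' m : ℕ, exp (-4 * π * (v - m / ℓ) ^ 2)) - (k / 2) * exp (-4 * π * v ^ 2)|
        ≤ C * k ^ 2 / ℓ := by
  obtain ⟨C, hC, hest⟩ := exists_abs_shiftSum_exp_neg_four_pi_mul_sub_sq_sub_le (inv_pos.mpr hℓ₀)
  set A := exp (1 / (4 * (4 * π))) * 2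
  refine ⟨π * A * (ℓ₀⁻¹ + 1) + C, by positivity, fun ℓ hℓ₀ℓ k v => ?_⟩
  have hℓ : 0 < ℓ := hℓ₀.trans_le hℓ₀ℓ
  set g := fun t => exp (-4 * π * (v - ℓ⁻¹ * t) ^ 2)
  have hS₁ : ∑' m : ℕ, exp (-2 * π * ((v - m / ℓ) ^ 2 + (v - (m - k) / ℓ) ^ 2))
      = exp (-(π * k ^ 2 * ℓ⁻¹ ^ 2)) * shiftSum g (k / 2) := by
    rw [shiftSum, ← tsum_mul_left]
    refine tsum_congr fun m => ?_
    rw [← exp_add]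
    congr 1
    field_simp
    ring
  have hS₀ : ∑' m : ℕ, exp (-4 * π * (v - m / ℓ) ^ 2) = shiftSum g 0 :=
    tsum_congr fun m => by rw [sub_zero, div_eq_inv_mul]
  have hS_nonneg : 0 ≤ shiftSum g (k / 2) := tsum_nonneg fun _ => (exp_pos _).le
  have hS_le : shiftSum g (k / 2) ≤ A * (1 + ℓ) := by
    refine (shiftSum_exp_neg_four_pi_mul_sub_sq_le v (inv_pos.mpr hℓ) (k / 2)).trans_eq ?_
    rw [one_div ℓ⁻¹, inv_inv]
    ring
  have hprefactor : |exp (-(π * k ^ 2 * ℓ⁻¹ ^ 2)) - 1| * shiftSum g (k / 2)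
      ≤ π * k ^ 2 * ℓ⁻¹ ^ 2 * (A * (1 + ℓ)) :=
    mul_le_mul (abs_exp_neg_sub_one_le (by positivity)) hS_le hS_nonneg (by positivity)
  have hshift := hest ℓ⁻¹ (inv_pos.mpr hℓ) (inv_anti₀ hℓ₀ hℓ₀ℓ) v k
  rw [hS₁, hS₀, show ∀ a b c d : ℝ, a * b - c - d = (a - 1) * b + (b - c - d) by intros; ring]
  refine (abs_add_le _ _).trans ?_
  rw [abs_mul, abs_of_nonneg hS_nonneg]
  calc _ ≤ π * k ^ 2 * ℓ⁻¹ ^ 2 * (A * (1 + ℓ)) + C * k ^ 2 * ℓ⁻¹ := add_le_add hprefactor hshift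
    _ = (π * A * (ℓ⁻¹ + 1) + C) * k ^ 2 / ℓ := by field_simp
    _ ≤ (π * A * (ℓ₀⁻¹ + 1) + C) * k ^ 2 / ℓ := by gcongr

theorem shifted_gaussian_sum_expansion_general (a₁ a₂ : ℝ) (ha₁ : 0 < a₁) :
    ∃ C > 0, ∀ p : ℕ, 1 ≤ p → ∀ a ∈ Set.Icc a₁ a₂, ∀ k : ℤ, ∀ v : ℝ,
      |(∑' m : ℕ, Real.exp (-2 * Real.pi *
            ((v - m / (a * Real.sqrt p)) ^ 2 + (v - (m - k) / (a * Real.sqrt p)) ^ 2))) -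
          (∑' m : ℕ, Real.exp (-4 * Real.pi * (v - m / (a * Real.sqrt p)) ^ 2)) -
          ((k : ℝ) / 2) * Real.exp (-4 * Real.pi * v ^ 2)| ≤
        C * (k : ℝ) ^ 2 * (p : ℝ) ^ (-(1 : ℝ) / 2) := by
  obtain ⟨C, hC, hest⟩ := exists_abs_tsum_exp_shifted_sub_le ha₁
  refine ⟨C / a₁, by positivity, fun p hp a ha k v => ?_⟩
  have hsqrt : 1 ≤ √(p : ℝ) := Real.one_le_sqrt.mpr (by exact_mod_cast hp)
  have hℓ : a₁ ≤ a * √p := by nlinarith [ha.1]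
  refine (hest _ hℓ k v).trans ?_
  rw [show (p : ℝ) ^ (-(1 : ℝ) / 2) = (√p)⁻¹ by
    rw [sqrt_eq_rpow, ← rpow_neg (Nat.cast_nonneg p)]; norm_num]
  calc C * k ^ 2 / (a * √p) ≤ C * k ^ 2 / (a₁ * √p) := by gcongr; exact ha.1
    _ = C / a₁ * k ^ 2 * (√p)⁻¹ := by field_simp

/-- Shifted Gaussian sum expansion, uniform in `k ∈ ℤ`, `v ∈ ℝ` and
`a ∈ [a₁, a₂] ⊂ (0, ∞)`. -/
theorem shifted_gaussian_sum_expansion (a₁ a₂ : ℝ) (ha₁ : 0 < a₁) (ha : a₁ ≤ a₂) :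
    ∃ C > 0, ∀ p : ℕ, 1 ≤ p → ∀ a ∈ Set.Icc a₁ a₂, ∀ k : ℤ, ∀ v : ℝ,
      |(∑' m : ℕ, Real.exp (-2 * Real.pi *
            ((v - m / (a * Real.sqrt p)) ^ 2 + (v - (m - k) / (a * Real.sqrt p)) ^ 2))) -
          (∑' m : ℕ, Real.exp (-4 * Real.pi * (v - m / (a * Real.sqrt p)) ^ 2)) -
          ((k : ℝ) / 2) * Real.exp (-4 * Real.pi * v ^ 2)| ≤
        C * (k : ℝ) ^ 2 * (p : ℝ) ^ (-(1 : ℝ) / 2) :=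
  shifted_gaussian_sum_expansion_general a₁ a₂ ha₁
end

section
/- Let H be a complex Hilbert space and let (U_t)_{t ∈ ℝ} be a strongly continuous one-parameter group of unitary operators on H satisfying U_0 = id, U_{s+t} = U_s ∘ U_t, and U_{t+1} = U_t for all s, t ∈ ℝ. For m ∈ ℤ and s ∈ H set s_m := ∫_0^1 exp(−2π i t m) · U_t s dt (Bochner integral). Then: (i) s_m belongs to the weight space H_m := { v ∈ H : U_t v = exp(2π i t m) · v for all t }; (ii) the vectors (s_m)_{m ∈ ℤ} are pairwise orthogonal; (iii) ∑_{m ∈ ℤ} ‖s_m‖² = ‖s‖²; and (iv) the series ∑_{m ∈ ℤ} s_m converges in H to s. In particular, H is the orthogonal Hilbert direct sum of the weight spaces (H_m)_{m ∈ ℤ}. -/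
/-!
The Fourier components `s_m` are the orthogonal projections of `s` onto the weight spaces:
a change of variables in the integral shows `s_m ∈ H_m`, unitarity gives `⟪v, s_m⟫ = ⟪v, s⟫`
for `v ∈ H_m`, and weight spaces of distinct weights are orthogonal. Hence
`‖s - ∑_{m ∈ F} s_m‖² = ‖s‖² - ∑_{m ∈ F} ‖s_m‖²` for every finite `F`, so `∑ ‖s_m‖²`
converges. The numbers `‖s_m‖²` are the Fourier coefficients of the continuous periodic
function `t ↦ ⟪s, U_t s⟫`; their summability makes its Fourier series converge at `0` to
`‖s‖²`, which is Parseval's identity, and the finite identity then gives `∑ s_m = s`.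
-/

open MeasureTheory intervalIntegral

open scoped InnerProductSpace ComplexConjugate

section Bessel

variable {𝕜 E ι : Type*} [RCLike 𝕜] [NormedAddCommGroup E] [InnerProductSpace 𝕜 E]
  {v : ι → E} {s : E}

theorem norm_sub_sum_sq_of_pairwise_orthogonal (horth : Pairwise fun i j => ⟪v i, v j⟫_𝕜 = 0)
    (hproj : ∀ i, ⟪v i, s⟫_𝕜 = ⟪v i, v i⟫_𝕜) (F : Finset ι) :
    ‖s - ∑ i ∈ F, v i‖ ^ 2 = ‖s‖ ^ 2 - ∑ i ∈ F, ‖v i‖ ^ 2 := by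
  have hsum : ∀ i ∈ F, ⟪v i, ∑ j ∈ F, v j⟫_𝕜 = ⟪v i, v i⟫_𝕜 := fun i hi => by
    rw [inner_sum, Finset.sum_eq_single_of_mem i hi fun j _ hji => horth hji.symm]
  have hperp : ⟪∑ i ∈ F, v i, s - ∑ i ∈ F, v i⟫_𝕜 = 0 := by
    rw [sum_inner]
    exact Finset.sum_eq_zero fun i hi => by rw [inner_sub_right, hproj, hsum i hi, sub_self]
  have hnorm : ‖∑ i ∈ F, v i‖ ^ 2 = ∑ i ∈ F, ‖v i‖ ^ 2 := by
    rw [← @inner_self_eq_norm_sq 𝕜, sum_inner, map_sum]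
    exact Finset.sum_congr rfl fun i hi => by rw [hsum i hi, inner_self_eq_norm_sq]
  have := norm_add_sq_eq_norm_sq_add_norm_sq_of_inner_eq_zero _ _ hperp
  rw [add_sub_cancel, ← sq, ← sq, ← sq, hnorm] at this
  linarith

theorem summable_norm_sq_of_pairwise_orthogonal
    (horth : Pairwise fun i j => ⟪v i, v j⟫_𝕜 = 0) (hproj : ∀ i, ⟪v i, s⟫_𝕜 = ⟪v i, v i⟫_𝕜) :
    Summable fun i => ‖v i‖ ^ 2 :=
  summable_of_sum_le (c := ‖s‖ ^ 2) (fun _ => sq_nonneg _) fun F => by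
    have := norm_sub_sum_sq_of_pairwise_orthogonal horth hproj F
    nlinarith [sq_nonneg ‖s - ∑ i ∈ F, v i‖]

theorem hasSum_of_hasSum_norm_sq_of_pairwise_orthogonal
    (horth : Pairwise fun i j => ⟪v i, v j⟫_𝕜 = 0) (hproj : ∀ i, ⟪v i, s⟫_𝕜 = ⟪v i, v i⟫_𝕜)
    (h : HasSum (fun i => ‖v i‖ ^ 2) (‖s‖ ^ 2)) : HasSum v s := by
  rw [HasSum, tendsto_iff_norm_sub_tendsto_zero]
  have hdist (F : Finset ι) : ‖∑ i ∈ F, v i - s‖ = √(‖s‖ ^ 2 - ∑ i ∈ F, ‖v i‖ ^ 2) := by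
    rw [norm_sub_rev, ← norm_sub_sum_sq_of_pairwise_orthogonal horth hproj F,
      Real.sqrt_sq (norm_nonneg _)]
  simp only [hdist]
  have := (h.const_sub (‖s‖ ^ 2)).sqrt
  rwa [sub_self, Real.sqrt_zero] at this

end Bessel

open Complex in
open scoped Real in
theorem hasSum_fourierSeries_of_periodic {φ : ℝ → ℂ} (hc : Continuous φ)
    (hp : Function.Periodic φ 1)
    (hsum : Summable fun m : ℤ => ∫ t in (0 : ℝ)..1, exp (-2 * π * I * t * m) * φ t) (x : ℝ) :
    HasSum (fun m : ℤ => (∫ t in (0 : ℝ)..1, exp (-2 * π * I * t * m) * φ t) *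
      exp (2 * π * I * x * m)) (φ x) := by
  have : Fact ((0 : ℝ) < 1) := ⟨one_pos⟩
  let F : C(AddCircle (1 : ℝ), ℂ) := ⟨hp.lift, continuous_coinduced_dom.mpr hc⟩
  have hcoeff : fourierCoeff F =
      fun m : ℤ => ∫ t in (0 : ℝ)..1, exp (-2 * π * I * t * m) * φ t := by
    ext m
    rw [fourierCoeff_eq_intervalIntegral _ m 0, zero_add, div_one, one_smul]
    refine integral_congr fun t _ => ?_
    rw [fourier_coe_apply, smul_eq_mul]
    simp only [F, ContinuousMap.coe_mk, hp.lift_coe]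
    push_cast
    ring_nf
  have := has_pointwise_sum_fourier_series_of_summable (hcoeff ▸ hsum) (x : AddCircle (1 : ℝ))
  simp only [hcoeff, fourier_coe_apply, smul_eq_mul] at this
  convert this using 1
  · ext m; congr 2; push_cast; ring
  · exact (hp.lift_coe x).symm

namespace CircleRep

open Complex
open scoped Real

variable {H : Type*} [NormedAddCommGroup H] [InnerProductSpace ℂ H] (U : ℝ → H ≃ₗᵢ[ℂ] H)

def weightSpace (m : ℤ) : Submodule ℂ H where
  carrier := {v | ∀ t : ℝ, U t v = exp (2 * π * I * t * m) • v}
  add_mem' hv hw t := by rw [map_add, hv t, hw t, smul_add]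
  zero_mem' t := by rw [map_zero, smul_zero]
  smul_mem' c v hv t := by rw [map_smul, hv t, smul_comm]

noncomputable def fourierComponent (s : H) (m : ℤ) : H :=
  ∫ t in (0 : ℝ)..1, exp (-2 * π * I * t * m) • U t s

variable {U}

theorem apply_zero (hadd : ∀ t u : ℝ, ∀ s : H, U (t + u) s = U t (U u s)) (s : H) :
    U 0 s = s :=
  (U 0).injective (by rw [← hadd, add_zero])

theorem conj_exp_two_pi_I (t : ℝ) (m : ℤ) :
    conj (exp (2 * π * I * t * m)) = exp (-2 * π * I * t * m) := by
  rw [← exp_conj]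
  congr 1
  simp only [map_mul, map_ofNat, conj_ofReal, conj_I, map_intCast]
  ring

theorem inner_apply_left_of_mem_weightSpace {m : ℤ} {v : H} (hv : v ∈ weightSpace U m)
    (t : ℝ) (w : H) : ⟪U t v, w⟫_ℂ = exp (-2 * π * I * t * m) * ⟪v, w⟫_ℂ := by
  rw [hv t, inner_smul_left, conj_exp_two_pi_I]

theorem inner_eq_zero_of_mem_weightSpace {m m' : ℤ} {v w : H} (hv : v ∈ weightSpace U m)
    (hw : w ∈ weightSpace U m') (hne : m ≠ m') : ⟪v, w⟫_ℂ = 0 := by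
  have hne' : (m' : ℂ) - m ≠ 0 := sub_ne_zero.mpr (mod_cast hne.symm)
  set t : ℝ := 1 / (2 * ((m' : ℝ) - m))
  have h := (U t).inner_map_map v w
  rw [inner_apply_left_of_mem_weightSpace hv, hw t, inner_smul_right, ← mul_assoc,
    ← exp_add] at h
  -- at this `t` the two characters differ by `exp (π i) = -1`
  rw [show -2 * π * I * t * m + 2 * π * I * t * m' = π * I by
    simp only [t]; push_cast; field_simp; ring, exp_pi_mul_I] at h
  linear_combination -h / 2

theorem periodic_fourierIntegrand (hper : ∀ t : ℝ, ∀ s : H, U (t + 1) s = U t s)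
    (s : H) (m : ℤ) :
    Function.Periodic (fun t : ℝ => exp (-2 * π * I * t * m) • U t s) 1 := fun t => by
  dsimp only
  rw [hper, ofReal_add, ofReal_one,
    show -2 * π * I * (t + 1) * m = -2 * π * I * t * m + (-m : ℤ) * (2 * π * I) by
      push_cast; ring,
    exp_add, exp_int_mul_two_pi_mul_I, mul_one]

variable [CompleteSpace H]

theorem fourierComponent_mem_weightSpace
    (hadd : ∀ t u : ℝ, ∀ s : H, U (t + u) s = U t (U u s))
    (hper : ∀ t : ℝ, ∀ s : H, U (t + 1) s = U t s) (s : H) (m : ℤ) :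
    fourierComponent U s m ∈ weightSpace U m := fun t => by
  set g := fun u : ℝ => exp (-2 * π * I * u * m) • U u s
  calc U t (fourierComponent U s m)
      = ∫ u in (0 : ℝ)..1, U t (g u) :=
        ((U t).toLinearIsometry.intervalIntegral_comp_comm _).symm
    _ = ∫ u in (0 : ℝ)..1, exp (2 * π * I * t * m) • g (u + t) :=
        integral_congr fun u _ => by
          simp only [g, LinearIsometryEquiv.map_smul, ← hadd, smul_smul, ← exp_add, add_comm t u]
          congr 2
          push_cast
          ring
    _ = exp (2 * π * I * t * m) • ∫ u in t..t + 1, g u := by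
        rw [intervalIntegral.integral_smul, integral_comp_add_right, zero_add, add_comm 1 t]
    _ = exp (2 * π * I * t * m) • fourierComponent U s m := by
        rw [(periodic_fourierIntegrand hper s m).intervalIntegral_add_eq t 0, zero_add]
        rfl

theorem pairwise_inner_fourierComponent_eq_zero
    (hadd : ∀ t u : ℝ, ∀ s : H, U (t + u) s = U t (U u s))
    (hper : ∀ t : ℝ, ∀ s : H, U (t + 1) s = U t s) (s : H) :
    Pairwise fun m m' => ⟪fourierComponent U s m, fourierComponent U s m'⟫_ℂ = 0 :=
  fun m m' => inner_eq_zero_of_mem_weightSpace (fourierComponent_mem_weightSpace hadd hper s m)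
    (fourierComponent_mem_weightSpace hadd hper s m')

theorem inner_fourierComponent (hcont : ∀ s : H, Continuous fun t => U t s) (v s : H) (m : ℤ) :
    ⟪v, fourierComponent U s m⟫_ℂ =
      ∫ t in (0 : ℝ)..1, exp (-2 * π * I * t * m) * ⟪v, U t s⟫_ℂ := by
  have hint : IntervalIntegrable (fun t : ℝ => exp (-2 * π * I * t * m) • U t s) volume 0 1 :=
    ((continuous_exp.comp (by fun_prop)).smul (hcont s)).intervalIntegrable 0 1
  simp_rw [← inner_smul_right]
  exact ((innerSL ℂ v).intervalIntegral_comp_comm hint).symm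

theorem inner_fourierComponent_of_mem_weightSpace (hcont : ∀ s : H, Continuous fun t => U t s)
    {m : ℤ} {v : H} (hv : v ∈ weightSpace U m) (s : H) :
    ⟪v, fourierComponent U s m⟫_ℂ = ⟪v, s⟫_ℂ := by
  have hconst (t : ℝ) : exp (-2 * π * I * t * m) * ⟪v, U t s⟫_ℂ = ⟪v, s⟫_ℂ := by
    rw [← inner_apply_left_of_mem_weightSpace hv, LinearIsometryEquiv.inner_map_map]
  rw [inner_fourierComponent hcont, integral_congr fun t _ => hconst t,
    intervalIntegral.integral_const, sub_zero, one_smul]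

theorem inner_fourierComponent_left_self (hcont : ∀ s : H, Continuous fun t => U t s)
    (hadd : ∀ t u : ℝ, ∀ s : H, U (t + u) s = U t (U u s))
    (hper : ∀ t : ℝ, ∀ s : H, U (t + 1) s = U t s) (s : H) (m : ℤ) :
    ⟪fourierComponent U s m, s⟫_ℂ = ⟪fourierComponent U s m, fourierComponent U s m⟫_ℂ :=
  (inner_fourierComponent_of_mem_weightSpace hcont
    (fourierComponent_mem_weightSpace hadd hper s m) s).symm

theorem hasSum_norm_sq_fourierComponent (hcont : ∀ s : H, Continuous fun t => U t s)
    (hadd : ∀ t u : ℝ, ∀ s : H, U (t + u) s = U t (U u s))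
    (hper : ∀ t : ℝ, ∀ s : H, U (t + 1) s = U t s) (s : H) :
    HasSum (fun m => ‖fourierComponent U s m‖ ^ 2) (‖s‖ ^ 2) := by
  have hproj := inner_fourierComponent_left_self hcont hadd hper s
  have hcoeff (m : ℤ) : ∫ t in (0 : ℝ)..1, exp (-2 * π * I * t * m) * ⟪s, U t s⟫_ℂ =
      ((‖fourierComponent U s m‖ ^ 2 : ℝ) : ℂ) := by
    rw [← inner_fourierComponent hcont, ← inner_conj_symm, hproj, inner_self_eq_norm_sq_to_K]
    norm_cast
    exact conj_ofReal _
  have hbessel := summable_norm_sq_of_pairwise_orthogonal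
    (pairwise_inner_fourierComponent_eq_zero hadd hper s) hproj
  have := hasSum_fourierSeries_of_periodic (φ := fun t => ⟪s, U t s⟫_ℂ)
    (continuous_const.inner (hcont s)) (fun t => by simp only [hper])
    (by simpa only [hcoeff] using summable_ofReal.mpr hbessel) 0
  simp only [hcoeff, ofReal_zero, mul_zero, zero_mul, exp_zero, mul_one, apply_zero hadd,
    inner_self_eq_norm_sq_to_K] at this
  exact hasSum_ofReal.mp (by rwa [ofReal_pow])

end CircleRep

open CircleRep in
theorem circle_rep_weight_decomposition_general {H : Type*} [NormedAddCommGroup H]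
    [InnerProductSpace ℂ H] [CompleteSpace H]
    (U : ℝ → H ≃ₗᵢ[ℂ] H)
    (hcont : ∀ s : H, Continuous fun t => U t s)
    (hadd : ∀ t u : ℝ, ∀ s : H, U (t + u) s = U t (U u s))
    (hper : ∀ t : ℝ, ∀ s : H, U (t + 1) s = U t s)
    (s : H) (sm : ℤ → H)
    (hsm : ∀ m : ℤ, sm m = ∫ t in (0 : ℝ)..1,
      Complex.exp (-2 * Real.pi * Complex.I * t * m) • U t s) :
    (∀ m : ℤ, ∀ t : ℝ,
        U t (sm m) = Complex.exp (2 * Real.pi * Complex.I * t * m) • sm m) ∧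
      (∀ m m' : ℤ, m ≠ m' → inner ℂ (sm m) (sm m') = (0 : ℂ)) ∧
      HasSum (fun m : ℤ => ‖sm m‖ ^ 2) (‖s‖ ^ 2) ∧
      HasSum sm s := by
  obtain rfl : sm = fourierComponent U s := funext hsm
  have horth := pairwise_inner_fourierComponent_eq_zero hadd hper s
  have hparseval := hasSum_norm_sq_fourierComponent hcont hadd hper s
  exact ⟨fourierComponent_mem_weightSpace hadd hper s, fun m m' => @horth m m', hparseval,
    hasSum_of_hasSum_norm_sq_of_pairwise_orthogonal horth
      (inner_fourierComponent_left_self hcont hadd hper s) hparseval⟩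

/-- Weight decomposition for a continuous unitary representation of the circle
`ℝ/ℤ` on a complex Hilbert space: the Fourier components `s m` of a vector `s`
belong to the weight spaces, are pairwise orthogonal, satisfy Parseval's
identity, and sum to `s`. -/
theorem circle_rep_weight_decomposition {H : Type*} [NormedAddCommGroup H]
    [InnerProductSpace ℂ H] [CompleteSpace H]
    (U : ℝ → H ≃ₗᵢ[ℂ] H)
    (hcont : ∀ s : H, Continuous fun t => U t s)
    (h0 : ∀ s : H, U 0 s = s)
    (hadd : ∀ t u : ℝ, ∀ s : H, U (t + u) s = U t (U u s))
    (hper : ∀ t : ℝ, ∀ s : H, U (t + 1) s = U t s)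
    (s : H) (sm : ℤ → H)
    (hsm : ∀ m : ℤ, sm m = ∫ t in (0 : ℝ)..1,
      Complex.exp (-2 * Real.pi * Complex.I * t * m) • U t s) :
    (∀ m : ℤ, ∀ t : ℝ,
        U t (sm m) = Complex.exp (2 * Real.pi * Complex.I * t * m) • sm m) ∧
      (∀ m m' : ℤ, m ≠ m' → inner ℂ (sm m) (sm m') = (0 : ℂ)) ∧
      HasSum (fun m : ℤ => ‖sm m‖ ^ 2) (‖s‖ ^ 2) ∧
      HasSum sm s :=
  circle_rep_weight_decomposition_general U hcont hadd hper s sm hsm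
end

section
/- (Tail bound for weighted Gaussian sums) Let r be a nonnegative integer, let α ∈ (0, 1), and let 0 < a₁ ≤ a₂ be real numbers. There exist constants C > 0 and c > 0 such that for every a ∈ [a₁, a₂], every integer p ≥ 1, and every v ∈ ℝ with |v| ≤ p^{α/4}, one has ∑_{m ∈ ℕ, m > α p^{(1+α)/2}} (m/√p)^{3r} · exp(−2π (v + m/(a√p))²) ≤ C · exp(−c · p^{α/2}). -/
open Real
open Nat

set_option maxHeartbeats 1000000

lemma aux_pow_le_exp (t : ℝ) (ht : 0 ≤ t) (n : ℕ) : t ^ n ≤ (n ! : ℝ) * Real.exp t := by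
  have h := Real.sum_le_exp_of_nonneg ht (n + 1)
  have h2 : t ^ n / n ! ≤ ∑ i ∈ Finset.range (n + 1), t ^ i / i ! :=
    Finset.single_le_sum (f := fun i => t ^ i / i !) (fun i _ => by positivity)
      (Finset.self_mem_range_succ n)
  have h3 : t ^ n / n ! ≤ Real.exp t := h2.trans h
  have hn : (0:ℝ) < (n ! : ℝ) := by positivity
  calc t ^ n = (t ^ n / (n ! : ℝ)) * (n ! : ℝ) := by field_simp
  _ ≤ Real.exp t * (n ! : ℝ) := by gcongr
  _ = (n ! : ℝ) * Real.exp t := mul_comm _ _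

lemma aux_summable (ε b : ℝ) (hε : 0 < ε) (hb : 0 < b) :
    Summable fun m : ℕ => Real.exp (-(ε * (m : ℝ) ^ b)) := by
  set k := ⌈2 / b⌉₊ with hk
  have hkb : (2:ℝ) ≤ b * k := by
    have h1 := Nat.le_ceil (2 / b)
    calc (2:ℝ) = b * (2 / b) := by field_simp
    _ ≤ b * k := by gcongr
  set D : ℝ := 4 * (k ! : ℝ) / ε ^ k + 1 with hD
  have hbound : ∀ m : ℕ, Real.exp (-(ε * (m : ℝ) ^ b)) ≤ D / ((m : ℝ) + 1) ^ 2 := by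
    intro m
    rcases Nat.eq_zero_or_pos m with hm | hm
    · subst hm
      have : (0:ℝ) ^ b = 0 := Real.zero_rpow hb.ne'
      simp [this, hD]
      positivity
    · have hm1 : (1:ℝ) ≤ (m : ℝ) := by exact_mod_cast hm
      have hmb : (0:ℝ) < (m : ℝ) ^ b := Real.rpow_pos_of_pos (by linarith) b
      set t := ε * (m : ℝ) ^ b with htd
      have ht0 : 0 < t := by positivity
      have h1 : Real.exp (-t) ≤ (k ! : ℝ) / t ^ k := by
        rw [Real.exp_neg, inv_eq_one_div, div_le_div_iff₀ (Real.exp_pos t) (by positivity), one_mul]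
        nlinarith [aux_pow_le_exp t ht0.le k]
      have hm2 : ((m:ℝ)) ^ (2:ℝ) = (m:ℝ) ^ (2:ℕ) := by
        rw [← Real.rpow_natCast (m:ℝ) 2]; norm_num
      have htk : t ^ k = ε ^ k * (m:ℝ) ^ (b * k) := by
        rw [htd, mul_pow, Real.rpow_mul (by positivity : (0:ℝ) ≤ (m:ℝ)), Real.rpow_natCast]
      have h2 : (k ! : ℝ) / t ^ k ≤ (4 * (k ! : ℝ) / ε ^ k) / ((m:ℝ) + 1) ^ 2 := by
        rw [div_le_div_iff₀ (by positivity) (by positivity), htk]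
        have hmbk : ((m:ℝ) + 1) ^ 2 ≤ 4 * (m:ℝ) ^ (b * k) := by
          calc ((m:ℝ) + 1) ^ 2 ≤ 4 * (m:ℝ) ^ (2:ℕ) := by nlinarith
          _ = 4 * (m:ℝ) ^ (2:ℝ) := by rw [hm2]
          _ ≤ 4 * (m:ℝ) ^ (b * k) := by
              have := Real.rpow_le_rpow_of_exponent_le hm1 hkb
              linarith
        have hεk : (0:ℝ) < ε ^ k := by positivity
        calc (k ! : ℝ) * (((m:ℝ) + 1) ^ 2) ≤ (k ! : ℝ) * (4 * (m:ℝ) ^ (b * k)) :=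
              mul_le_mul_of_nonneg_left hmbk (Nat.cast_nonneg _)
        _ = 4 * (k ! : ℝ) / ε ^ k * (ε ^ k * (m:ℝ) ^ (b * k)) := by field_simp
      calc Real.exp (-t) ≤ (k ! : ℝ) / t ^ k := h1
      _ ≤ (4 * (k ! : ℝ) / ε ^ k) / ((m:ℝ) + 1) ^ 2 := h2
      _ ≤ D / ((m:ℝ) + 1) ^ 2 := by gcongr; rw [hD]; linarith
  have hcomp : Summable fun m : ℕ => D / ((m:ℝ) + 1) ^ 2 := by
    have h0 : Summable fun n : ℕ => 1 / ((n:ℝ)) ^ 2 :=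
      Real.summable_one_div_nat_pow.mpr one_lt_two
    have h1 : Summable fun n : ℕ => 1 / (((n + 1 : ℕ)):ℝ) ^ 2 :=
      (summable_nat_add_iff (f := fun n : ℕ => 1 / ((n:ℝ)) ^ 2) 1).mpr h0
    apply (h1.mul_left D).congr
    intro n
    push_cast
    ring
  exact Summable.of_nonneg_of_le (fun m => (Real.exp_pos _).le) hbound hcomp


lemma arith1 (v x q : ℝ) (hv2 : v ^ 2 ≤ x * q) :
    x ^ 2 / 2 - 2 * q ^ 2 ≤ 2 * (v + x) ^ 2 := by
  nlinarith [sq_nonneg (2 * v + x), sq_nonneg (x - 2 * q)]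

lemma arith3 (x a₂ P : ℝ) (hP : 3 ≤ P) : a₂ * x ≤ P / 4 * x ^ 2 + a₂ ^ 2 / 3 := by
  nlinarith [sq_nonneg (3 * x - 2 * a₂), sq_nonneg x]

lemma arith4 (v x q P : ℝ) (hP : 0 < P) (h : x ^ 2 / 2 - 2 * q ^ 2 ≤ 2 * (v + x) ^ 2) :
    -2 * P * (v + x) ^ 2 ≤ 2 * P * q ^ 2 - P / 2 * x ^ 2 := by
  nlinarith [mul_le_mul_of_nonneg_left h hP.le]


/-- Tail bound for weighted Gaussian sums: the part of the sum with
`m > α p^{(1+α)/2}` is exponentially small, uniformly in `a ∈ [a₁, a₂]`,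
`p ≥ 1` and `|v| ≤ p^{α/4}`. -/
theorem gaussian_sum_tail_bound (r : ℕ) (α : ℝ) (hα : α ∈ Set.Ioo (0 : ℝ) 1)
    (a₁ a₂ : ℝ) (ha₁ : 0 < a₁) (ha : a₁ ≤ a₂) :
    ∃ C > 0, ∃ c > 0, ∀ a ∈ Set.Icc a₁ a₂, ∀ p : ℕ, 1 ≤ p → ∀ v : ℝ,
      |v| ≤ (p : ℝ) ^ (α / 4) →
      (∑' m : ℕ, if α * (p : ℝ) ^ ((1 + α) / 2) < (m : ℝ) then
          ((m : ℝ) / Real.sqrt p) ^ (3 * r) *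
            Real.exp (-2 * Real.pi * (v + m / (a * Real.sqrt p)) ^ 2)
        else 0) ≤
      C * Real.exp (-c * (p : ℝ) ^ (α / 2)) := by
  obtain ⟨hα0, hα1⟩ := hα
  have ha₂ : 0 < a₂ := lt_of_lt_of_le ha₁ ha
  have h1α : (0:ℝ) < 1 + α := by linarith
  obtain ⟨β, hβ⟩ : ∃ β : ℝ, β = α / (1 + α) := ⟨_, rfl⟩
  have hβ0 : 0 < β := hβ ▸ div_pos hα0 h1α
  obtain ⟨c₁, hc₁def⟩ : ∃ c₁ : ℝ, c₁ = α ^ (1 / (1 + α) : ℝ) / a₂ := ⟨_, rfl⟩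
  have hc₁ : 0 < c₁ := hc₁def ▸ div_pos (Real.rpow_pos_of_pos hα0 _) ha₂
  obtain ⟨ε, hεdef⟩ : ∃ ε : ℝ, ε = π * c₁ ^ 2 / 8 := ⟨_, rfl⟩
  have hε : 0 < ε := hεdef ▸ div_pos (mul_pos Real.pi_pos (pow_pos hc₁ 2)) (by norm_num)
  obtain ⟨q, hqdef⟩ : ∃ q : ℝ, q = a₂ / α := ⟨_, rfl⟩
  have hq0 : 0 < q := hqdef ▸ div_pos ha₂ hα0
  obtain ⟨c, hcdef⟩ : ∃ c : ℝ, c = π * (α / a₂) ^ 2 / 8 := ⟨_, rfl⟩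
  have hc : 0 < c :=
    hcdef ▸ div_pos (mul_pos Real.pi_pos (pow_pos (div_pos hα0 ha₂) 2)) (by norm_num)
  obtain ⟨B, hBdef⟩ : ∃ B : ℝ, B = 2 * π * q ^ 2 + a₂ ^ 2 / 3 := ⟨_, rfl⟩
  obtain ⟨K, hKdef⟩ : ∃ K : ℝ, K = ((3 * r)! : ℝ) * Real.exp B := ⟨_, rfl⟩
  have hK : 0 < K := hKdef ▸ mul_pos (by positivity) (Real.exp_pos _)
  have hS : Summable (fun m : ℕ => Real.exp (-(ε * (m : ℝ) ^ (2 * β)))) :=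
    aux_summable ε (2 * β) hε (by linarith only [hβ0])
  obtain ⟨S, hSdef⟩ : ∃ S : ℝ, S = ∑' m : ℕ, Real.exp (-(ε * (m : ℝ) ^ (2 * β))) := ⟨_, rfl⟩
  have hSpos : 0 < S := by
    have h0 : (0:ℝ) < Real.exp (-(ε * ((0 : ℕ) : ℝ) ^ (2 * β))) := Real.exp_pos _
    have h1 := Summable.le_tsum hS 0 (fun j _ => (Real.exp_pos _).le)
    rw [hSdef]
    exact lt_of_lt_of_le h0 h1
  refine ⟨K * S, mul_pos hK hSpos, c, hc, ?_⟩
  intro a haI p hp v hv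
  obtain ⟨ha1, ha2'⟩ := haI
  have ha0 : 0 < a := lt_of_lt_of_le ha₁ ha1
  have hp0 : (0:ℝ) < (p : ℝ) := by exact_mod_cast hp
  have hp1 : (1:ℝ) ≤ (p : ℝ) := by exact_mod_cast hp
  have hs0 : 0 < Real.sqrt p := Real.sqrt_pos.mpr hp0
  have hs_eq : Real.sqrt p = (p : ℝ) ^ (1 / 2 : ℝ) := Real.sqrt_eq_rpow _
  obtain ⟨g, hgdef⟩ : ∃ g : ℕ → ℝ, g = fun m : ℕ =>
    K * Real.exp (-c * (p : ℝ) ^ (α / 2)) * Real.exp (-(ε * (m : ℝ) ^ (2 * β))) := ⟨_, rfl⟩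
  have hgpos : ∀ m, 0 < g m := fun m => by
    simp only [hgdef]
    exact mul_pos (mul_pos hK (Real.exp_pos _)) (Real.exp_pos _)
  have key : ∀ m : ℕ, (if α * (p : ℝ) ^ ((1 + α) / 2) < (m : ℝ) then
      ((m : ℝ) / Real.sqrt p) ^ (3 * r) *
        Real.exp (-2 * Real.pi * (v + m / (a * Real.sqrt p)) ^ 2)
    else 0) ≤ g m := by
    intro m
    split_ifs with hm
    · -- main estimate
      have hthr : 0 < α * (p : ℝ) ^ ((1 + α) / 2) :=
        mul_pos hα0 (Real.rpow_pos_of_pos hp0 _)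
      have hm0 : (0:ℝ) < (m : ℝ) := hthr.trans hm
      have hm1 : (1:ℝ) ≤ (m : ℝ) := by
        have : 0 < m := by exact_mod_cast hm0
        exact_mod_cast this
      obtain ⟨x, hxdef⟩ : ∃ x : ℝ, x = (m : ℝ) / (a * Real.sqrt p) := ⟨_, rfl⟩
      have hx0 : 0 < x := hxdef ▸ div_pos hm0 (mul_pos ha0 hs0)
      have hsplit : (p : ℝ) ^ ((1 + α) / 2) = (p : ℝ) ^ (α / 2) * Real.sqrt p := by
        rw [hs_eq, ← Real.rpow_add hp0]
        congr 1
        ring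
      have hP0 : 0 < (p : ℝ) ^ (α / 2) := Real.rpow_pos_of_pos hp0 _
      have hxκ : (α / a₂) * (p : ℝ) ^ (α / 2) ≤ x := by
        rw [hxdef, le_div_iff₀ (mul_pos ha0 hs0)]
        have h0 : (0:ℝ) ≤ α / a₂ * (p : ℝ) ^ (α / 2) :=
          (mul_pos (div_pos hα0 ha₂) hP0).le
        calc α / a₂ * (p : ℝ) ^ (α / 2) * (a * Real.sqrt p)
            ≤ α / a₂ * (p : ℝ) ^ (α / 2) * (a₂ * Real.sqrt p) :=
              mul_le_mul_of_nonneg_left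
                (mul_le_mul_of_nonneg_right ha2' hs0.le) h0
          _ = α * ((p : ℝ) ^ (α / 2) * Real.sqrt p) := by
              field_simp
          _ = α * (p : ℝ) ^ ((1 + α) / 2) := by rw [← hsplit]
          _ ≤ (m : ℝ) := hm.le
      have hww : Real.sqrt p ≤ ((m : ℝ) / α) ^ (1 / (1 + α) : ℝ) := by
        have h1 : (p : ℝ) ^ ((1 + α) / 2) ≤ (m : ℝ) / α := by
          rw [le_div_iff₀ hα0]
          linarith only [hm]
        have h2 := Real.rpow_le_rpow (by positivity) h1 (le_of_lt (one_div_pos.mpr h1α))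
        rw [← Real.rpow_mul hp0.le] at h2
        have he : (1 + α) / 2 * (1 / (1 + α)) = (1 / 2 : ℝ) := by
          field_simp
        rw [he] at h2
        rw [hs_eq]
        exact h2
      have hw0 : 0 < ((m : ℝ) / α) ^ (1 / (1 + α) : ℝ) :=
        Real.rpow_pos_of_pos (div_pos hm0 hα0) _
      have hxm : c₁ * (m : ℝ) ^ β ≤ x := by
        have step : (m : ℝ) / (a₂ * ((m : ℝ) / α) ^ (1 / (1 + α) : ℝ)) ≤ x := by
          rw [hxdef, div_le_div_iff₀ (mul_pos ha₂ hw0) (mul_pos ha0 hs0)]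
          exact mul_le_mul_of_nonneg_left
            (mul_le_mul ha2' hww hs0.le ha₂.le) hm0.le
        have hαe : (0:ℝ) < α ^ (1 / (1 + α) : ℝ) := Real.rpow_pos_of_pos hα0 _
        have hme : (0:ℝ) < (m : ℝ) ^ (1 / (1 + α) : ℝ) := Real.rpow_pos_of_pos hm0 _
        have key2 : (m : ℝ) ^ (1 / (1 + α) : ℝ) * (m : ℝ) ^ β = (m : ℝ) := by
          rw [← Real.rpow_add hm0]
          have he2 : (1 / (1 + α) : ℝ) + β = 1 := by
            rw [hβ]
            field_simp
          rw [he2, Real.rpow_one]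
        have hdr : ((m : ℝ) / α) ^ (1 / (1 + α) : ℝ)
            = (m : ℝ) ^ (1 / (1 + α) : ℝ) / α ^ (1 / (1 + α) : ℝ) :=
          Real.div_rpow hm0.le hα0.le _
        have hca : c₁ * a₂ = α ^ (1 / (1 + α) : ℝ) := by
          rw [hc₁def]
          exact div_mul_cancel₀ _ (ne_of_gt ha₂)
        have hprod : c₁ * (m : ℝ) ^ β *
            (a₂ * ((m : ℝ) ^ (1 / (1 + α) : ℝ) / α ^ (1 / (1 + α) : ℝ))) = (m : ℝ) := by
          have hre : c₁ * (m : ℝ) ^ β *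
              (a₂ * ((m : ℝ) ^ (1 / (1 + α) : ℝ) / α ^ (1 / (1 + α) : ℝ)))
              = α ^ (1 / (1 + α) : ℝ) * ((m : ℝ) ^ (1 / (1 + α) : ℝ) * (m : ℝ) ^ β)
                / α ^ (1 / (1 + α) : ℝ) := by
            rw [← hca]
            ring
          rw [hre, key2]
          exact mul_div_cancel_left₀ _ (ne_of_gt hαe)
        have heq : (m : ℝ) / (a₂ * ((m : ℝ) / α) ^ (1 / (1 + α) : ℝ)) = c₁ * (m : ℝ) ^ β := by
          rw [hdr]
          exact (div_eq_iff (ne_of_gt (mul_pos ha₂ (div_pos hme hαe)))).mpr hprod.symm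
        rw [← heq]
        exact step
      have hva : v ^ 2 ≤ (p : ℝ) ^ (α / 2) := by
        have h1 : v ^ 2 ≤ ((p : ℝ) ^ (α / 4)) ^ 2 := by
          obtain ⟨hl, hr⟩ := abs_le.mp hv
          exact sq_le_sq' hl hr
        have h2 : ((p : ℝ) ^ (α / 4)) ^ 2 = (p : ℝ) ^ (α / 2) := by
          rw [← Real.rpow_natCast ((p : ℝ) ^ (α / 4)) 2, ← Real.rpow_mul hp0.le]
          congr 1
          ring
        rw [h2] at h1
        exact h1
      have hv2 : v ^ 2 ≤ x * q := by
        have h1 : (p : ℝ) ^ (α / 2) = ((α / a₂) * (p : ℝ) ^ (α / 2)) * q := by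
          rw [hqdef]
          field_simp
        have h2 : ((α / a₂) * (p : ℝ) ^ (α / 2)) * q ≤ x * q :=
          mul_le_mul_of_nonneg_right hxκ hq0.le
        rw [h1] at hva
        linarith only [hva, h2]
      have hE1 : x ^ 2 / 2 - 2 * q ^ 2 ≤ 2 * (v + x) ^ 2 := arith1 v x q hv2
      have hpα : ((p : ℝ) ^ (α / 2)) ^ 2 = (p : ℝ) ^ α := by
        rw [← Real.rpow_natCast ((p : ℝ) ^ (α / 2)) 2, ← Real.rpow_mul hp0.le]
        congr 1
        ring
      have hx2p : (α / a₂) ^ 2 * (p : ℝ) ^ α ≤ x ^ 2 := by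
        have h0 : (0:ℝ) ≤ α / a₂ * (p : ℝ) ^ (α / 2) :=
          (mul_pos (div_pos hα0 ha₂) hP0).le
        calc (α / a₂) ^ 2 * (p : ℝ) ^ α = (α / a₂ * (p : ℝ) ^ (α / 2)) ^ 2 := by
              rw [mul_pow, hpα]
          _ ≤ x ^ 2 := pow_le_pow_left₀ h0 hxκ 2
      have hmβ : ((m : ℝ) ^ β) ^ 2 = (m : ℝ) ^ (2 * β) := by
        rw [← Real.rpow_natCast ((m : ℝ) ^ β) 2, ← Real.rpow_mul hm0.le]
        ring_nf
      have hx2m : c₁ ^ 2 * (m : ℝ) ^ (2 * β) ≤ x ^ 2 := by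
        have h0 : (0:ℝ) ≤ c₁ * (m : ℝ) ^ β :=
          (mul_pos hc₁ (Real.rpow_pos_of_pos hm0 β)).le
        calc c₁ ^ 2 * (m : ℝ) ^ (2 * β) = (c₁ * (m : ℝ) ^ β) ^ 2 := by
              rw [mul_pow, hmβ]
          _ ≤ x ^ 2 := pow_le_pow_left₀ h0 hxm 2
      have hpαα : (p : ℝ) ^ (α / 2) ≤ (p : ℝ) ^ α :=
        Real.rpow_le_rpow_of_exponent_le hp1 (by linarith only [hα0])
      have hπ0 := Real.pi_pos
      have hπ3 := Real.pi_gt_three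
      have t1 : c * (p : ℝ) ^ (α / 2) ≤ π / 8 * x ^ 2 := by
        calc c * (p : ℝ) ^ (α / 2) ≤ c * (p : ℝ) ^ α :=
              mul_le_mul_of_nonneg_left hpαα hc.le
          _ = π / 8 * ((α / a₂) ^ 2 * (p : ℝ) ^ α) := by rw [hcdef]; ring
          _ ≤ π / 8 * x ^ 2 := by
              apply mul_le_mul_of_nonneg_left hx2p
              positivity
      have t2 : ε * (m : ℝ) ^ (2 * β) ≤ π / 8 * x ^ 2 := by
        calc ε * (m : ℝ) ^ (2 * β) = π / 8 * (c₁ ^ 2 * (m : ℝ) ^ (2 * β)) := by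
              rw [hεdef]; ring
          _ ≤ π / 8 * x ^ 2 := by
              apply mul_le_mul_of_nonneg_left hx2m
              positivity
      have t3 : a₂ * x ≤ π / 4 * x ^ 2 + a₂ ^ 2 / 3 := arith3 x a₂ π hπ3.le
      have t4 : -2 * π * (v + x) ^ 2 ≤ 2 * π * q ^ 2 - π / 2 * x ^ 2 :=
        arith4 v x q π Real.pi_pos hE1
      have hExp : a₂ * x + -2 * π * (v + x) ^ 2
          ≤ B - c * (p : ℝ) ^ (α / 2) - ε * (m : ℝ) ^ (2 * β) := by
        rw [hBdef]
        linarith only [t1, t2, t3, t4]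
      have hms : (m : ℝ) / Real.sqrt p = a * x := by
        rw [hxdef]
        field_simp
      rw [hms, ← hxdef]
      calc (a * x) ^ (3 * r) * Real.exp (-2 * Real.pi * (v + x) ^ 2)
          ≤ (((3 * r)! : ℝ) * Real.exp (a₂ * x)) * Real.exp (-2 * Real.pi * (v + x) ^ 2) := by
            apply mul_le_mul_of_nonneg_right _ (Real.exp_pos _).le
            calc (a * x) ^ (3 * r) ≤ (a₂ * x) ^ (3 * r) :=
                  pow_le_pow_left₀ (mul_pos ha0 hx0).le
                    (mul_le_mul_of_nonneg_right ha2' hx0.le) _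
              _ ≤ ((3 * r)! : ℝ) * Real.exp (a₂ * x) :=
                  aux_pow_le_exp _ (mul_pos ha₂ hx0).le _
        _ = ((3 * r)! : ℝ) * Real.exp (a₂ * x + -2 * Real.pi * (v + x) ^ 2) := by
            rw [mul_assoc, ← Real.exp_add]
        _ ≤ ((3 * r)! : ℝ) * Real.exp (B - c * (p : ℝ) ^ (α / 2) - ε * (m : ℝ) ^ (2 * β)) := by
            have := Real.exp_le_exp.mpr hExp
            exact mul_le_mul_of_nonneg_left this (by positivity)
        _ = g m := by
            simp only [hgdef, hKdef]
            rw [show B - c * (p : ℝ) ^ (α / 2) - ε * (m : ℝ) ^ (2 * β)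
              = B + (-c * (p : ℝ) ^ (α / 2)) + (-(ε * (m : ℝ) ^ (2 * β))) by ring]
            rw [Real.exp_add, Real.exp_add]
            ring
    · exact (hgpos m).le
  have hg : Summable g := by
    simp only [hgdef]
    exact hS.mul_left _
  have hf : Summable (fun m : ℕ => if α * (p : ℝ) ^ ((1 + α) / 2) < (m : ℝ) then
      ((m : ℝ) / Real.sqrt p) ^ (3 * r) *
        Real.exp (-2 * Real.pi * (v + m / (a * Real.sqrt p)) ^ 2)
    else 0) := by
    apply Summable.of_nonneg_of_le _ key hg
    intro m
    split_ifs
    · positivity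
    · exact le_rfl
  calc (∑' m : ℕ, if α * (p : ℝ) ^ ((1 + α) / 2) < (m : ℝ) then
          ((m : ℝ) / Real.sqrt p) ^ (3 * r) *
            Real.exp (-2 * Real.pi * (v + m / (a * Real.sqrt p)) ^ 2)
        else 0)
      ≤ ∑' m : ℕ, g m := Summable.tsum_le_tsum key hf hg
    _ = K * Real.exp (-c * (p : ℝ) ^ (α / 2)) * S := by
        simp only [hgdef]
        rw [hSdef]
        exact tsum_mul_left
    _ ≤ K * S * Real.exp (-c * (p : ℝ) ^ (α / 2)) := le_of_eq (by ring)
end
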